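/- arXiv:2506.12954 — 8 statements merged into one kernel-verified Lean document; each statement's English description precedes it below -/
import Mathlib

section
/- Let r ≥ 1 and C₀ > 0. Suppose the mesh 0 = t_0 < t_1 < ⋯ < t_M satisfies τ_j ≤ C₀ τ^{1/r} t_j^{1−1/r} for all 1 ≤ j ≤ M, where τ_j := t_j − t_{j−1} and τ := t_1. Then there exists a constant c ∈ (0, 1/2), depending only on r and C₀, such that t_{j−1} ≥ c·t_j for all 2 ≤ j ≤ M. -/
/-!
Write `s = t_{j-1}` and `u = t_j`. Since the mesh is increasing, `τ = t_1 ≤ s`, so the grading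
condition gives `u - s ≤ C₀ s^{1/r} u^{1-1/r}`. If `s < c u` with `C₀ c^{1/r} ≤ 1/2`, the right-hand
side is at most `u / 2`, forcing `s ≥ u / 2 > c u`. Hence `c = min (1/4) ((2 C₀)⁻¹ ^ r)` works.
-/

open Set

noncomputable def meshRatio (r C : ℝ) : ℝ := min (1 / 4) ((2 * C)⁻¹ ^ r)

section meshRatio

variable {r C : ℝ}

lemma meshRatio_pos (hC : 0 < C) : 0 < meshRatio r C :=
  lt_min (by norm_num) (by positivity)

lemma meshRatio_lt_half : meshRatio r C < 1 / 2 :=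
  (min_le_left _ _).trans_lt (by norm_num)

lemma mul_meshRatio_rpow_inv_le_half (hr : 0 < r) (hC : 0 < C) :
    C * meshRatio r C ^ (1 / r) ≤ 1 / 2 := by
  have hroot : meshRatio r C ^ (1 / r) ≤ (2 * C)⁻¹ := by
    calc meshRatio r C ^ (1 / r) ≤ ((2 * C)⁻¹ ^ r) ^ r⁻¹ := by
          rw [one_div]
          exact Real.rpow_le_rpow (meshRatio_pos hC).le (min_le_right _ _) (by positivity)
      _ = (2 * C)⁻¹ := Real.rpow_rpow_inv (by positivity) hr.ne'
  calc C * meshRatio r C ^ (1 / r) ≤ C * (2 * C)⁻¹ := by gcongr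
    _ = 1 / 2 := by field_simp

lemma meshRatio_mul_le_of_sub_le {s u : ℝ} (hr : 0 < r) (hC : 0 < C) (hs : 0 ≤ s)
    (h : u - s ≤ C * s ^ (1 / r) * u ^ (1 - 1 / r)) : meshRatio r C * u ≤ s := by
  by_contra! hlt
  set c := meshRatio r C
  have hc : 0 < c := meshRatio_pos hC
  have hu : 0 < u := pos_of_mul_pos_right (hs.trans_lt hlt) hc.le
  have hsplit : u ^ (1 / r) * u ^ (1 - 1 / r) = u := by
    rw [← Real.rpow_add hu, add_sub_cancel, Real.rpow_one]
  have hhalf : u - s ≤ u / 2 :=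
    calc u - s ≤ C * s ^ (1 / r) * u ^ (1 - 1 / r) := h
      _ ≤ C * (c * u) ^ (1 / r) * u ^ (1 - 1 / r) := by gcongr
      _ = C * c ^ (1 / r) * (u ^ (1 / r) * u ^ (1 - 1 / r)) := by
          rw [Real.mul_rpow hc.le hu.le]; ring
      _ ≤ 1 / 2 * u := by
          rw [hsplit]; exact mul_le_mul_of_nonneg_right (mul_meshRatio_rpow_inv_le_half hr hC) hu.le
      _ = u / 2 := by ring
  nlinarith [meshRatio_lt_half (r := r) (C := C)]

end meshRatio

lemma strictMonoOn_Iic_of_lt_pred {α : Type*} [Preorder α] {M : ℕ} {t : ℕ → α}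
    (h : ∀ j, 1 ≤ j → j ≤ M → t (j - 1) < t j) : StrictMonoOn t (Iic M) :=
  strictMonoOn_of_lt_succ ordConnected_Iic fun a _ _ ha ↦ by
    simpa using h (a + 1) (by omega) (by simpa using ha)

/-- On a mesh `0 = t 0 < t 1 < ⋯ < t M` satisfying the quasi-graded
condition `τ_j ≤ C₀ τ^{1/r} t_j^{1-1/r}`, there is a constant `c ∈ (0, 1/2)`,
depending only on `r` and `C₀`, with `t_{j-1} ≥ c * t_j` for all `2 ≤ j ≤ M`. -/
theorem stmt0 (r C₀ : ℝ) (hr : 1 ≤ r) (hC₀ : 0 < C₀) :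
    ∃ c : ℝ, 0 < c ∧ c < 1 / 2 ∧
      ∀ (M : ℕ) (t : ℕ → ℝ),
        t 0 = 0 →
        (∀ j, 1 ≤ j → j ≤ M → t (j - 1) < t j) →
        (∀ j, 1 ≤ j → j ≤ M →
          t j - t (j - 1) ≤ C₀ * (t 1) ^ (1 / r) * (t j) ^ (1 - 1 / r)) →
        ∀ j, 2 ≤ j → j ≤ M → c * t j ≤ t (j - 1) := by
  have hr₀ : 0 < r := one_pos.trans_le hr
  refine ⟨meshRatio r C₀, meshRatio_pos hC₀, meshRatio_lt_half, ?_⟩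
  intro M t ht₀ hinc hgraded j hj hjM
  have hmono := strictMonoOn_Iic_of_lt_pred hinc
  have hτ : 0 < t 1 := ht₀ ▸ hmono (by simp) (by simp; omega) zero_lt_one
  have hτs : t 1 ≤ t (j - 1) := hmono.monotoneOn (by simp; omega) (by simp; omega) (by omega)
  have hu : 0 ≤ t j := (hτ.trans_le hτs).le.trans (hinc j (by omega) hjM).le
  refine meshRatio_mul_le_of_sub_le hr₀ hC₀ (hτ.le.trans hτs) ?_
  calc t j - t (j - 1) ≤ C₀ * t 1 ^ (1 / r) * t j ^ (1 - 1 / r) := hgraded j (by omega) hjM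
    _ ≤ C₀ * t (j - 1) ^ (1 / r) * t j ^ (1 - 1 / r) := by gcongr
end

section
/- (Comparison principle for the discrete operator.) Let α ∈ (0,1) and λ0, λ1 ≥ 0, and let the mesh satisfy λ0·τ_j^α < 1/Γ(2−α) for all 1 ≤ j ≤ M. If a sequence (V^m)_{m=0}^M satisfies V^0 ≤ 0 and δ^α V^m − λ0 V^m − λ1 V^{m−1} ≤ 0 for all 1 ≤ m ≤ M, then V^m ≤ 0 for all 0 ≤ m ≤ M. -/
/-!
Write `δ^α V^m = Γ(2-α)⁻¹ ∑_{j ≤ m} w_j (V^j - V^{j-1})`, where `w_j` is the secant slope of the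
concave map `x ↦ x^(1-α)` over `[t_m - t_j, t_m - t_{j-1}]`. These intervals move left as `j`
grows, so `0 ≤ w_1 ≤ ⋯ ≤ w_m = τ_m^(-α)`, and summation by parts gives
`δ^α V^m ≥ τ_m^(-α) V^m / Γ(2-α)` once `V^0, …, V^{m-1} ≤ 0`. The mesh condition says
`τ_m^(-α) / Γ(2-α) > λ0`, so the inequality at step `m` forces `V^m ≤ 0`; induct on `m`.
-/

/-- The L1 discrete fractional-derivative operator on the mesh `t`. -/
noncomputable def l1 (α : ℝ) (t : ℕ → ℝ) (V : ℕ → ℝ) (m : ℕ) : ℝ :=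
  (1 / Real.Gamma (1 - α)) * ∑ j ∈ Finset.Icc 1 m,
    ((V j - V (j - 1)) / (t j - t (j - 1))) *
      ∫ s in (t (j - 1))..(t j), (t m - s) ^ (-α)

open Finset Real

lemma intervalIntegral_sub_rpow_neg {α : ℝ} (hα : α < 1) (a b c : ℝ) :
    ∫ s in a..b, (c - s) ^ (-α) = ((c - a) ^ (1 - α) - (c - b) ^ (1 - α)) / (1 - α) := by
  rw [intervalIntegral.integral_comp_sub_left (fun u => u ^ (-α)) c,
    integral_rpow (Or.inl (by linarith))]
  ring_nf

lemma mul_le_sum_mul_sub {c V : ℕ → ℝ} {n : ℕ} (hn : 1 ≤ n) (hc₁ : 0 ≤ c 1)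
    (hc : ∀ j, 1 ≤ j → j < n → c j ≤ c (j + 1)) (hV : ∀ j < n, V j ≤ 0) :
    c n * V n ≤ ∑ j ∈ Icc 1 n, c j * (V j - V (j - 1)) := by
  induction n, hn using Nat.le_induction with
  | base => simp only [Icc_self, sum_singleton]; nlinarith [hV 0 one_pos]
  | succ n hn ih =>
    rw [sum_Icc_succ_top (by omega), Nat.add_sub_cancel]
    have hsum := ih (fun j h₁ h₂ => hc j h₁ (by omega)) (fun j hj => hV j (by omega))
    nlinarith [hc n hn (by omega), hV n (by omega), hsum]

/-- `Γ(2-α)` times the coefficient of `V^j - V^{j-1}` in `δ^α V^m`. -/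
noncomputable def l1Weight (α : ℝ) (t : ℕ → ℝ) (m j : ℕ) : ℝ :=
  ((t m - t (j - 1)) ^ (1 - α) - (t m - t j) ^ (1 - α)) / (t j - t (j - 1))

lemma l1_eq_sum_l1Weight {α : ℝ} (hα : α < 1) (t V : ℕ → ℝ) (m : ℕ) :
    l1 α t V m = 1 / Gamma (2 - α) * ∑ j ∈ Icc 1 m, l1Weight α t m j * (V j - V (j - 1)) := by
  have hΓ : Gamma (2 - α) = (1 - α) * Gamma (1 - α) := by
    rw [show 2 - α = (1 - α) + 1 by ring, Gamma_add_one (by linarith)]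
  simp only [l1, l1Weight, intervalIntegral_sub_rpow_neg hα, hΓ, one_div, mul_inv, mul_sum]
  exact sum_congr rfl fun j _ => by ring

section l1Weight

variable {α : ℝ} {t : ℕ → ℝ} {m j : ℕ}

lemma l1Weight_nonneg (hα : α ≤ 1) (h₁ : t (j - 1) ≤ t j) (h₂ : t j ≤ t m) :
    0 ≤ l1Weight α t m j :=
  div_nonneg (sub_nonneg.2 (rpow_le_rpow (sub_nonneg.2 h₂) (by linarith) (by linarith)))
    (sub_nonneg.2 h₁)

lemma l1Weight_le_succ (hα₀ : 0 ≤ α) (hα₁ : α ≤ 1) (h₁ : t (j - 1) < t j)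
    (h₂ : t j < t (j + 1)) (h₃ : t (j + 1) ≤ t m) :
    l1Weight α t m j ≤ l1Weight α t m (j + 1) := by
  have hslope := (concaveOn_rpow (by linarith : 0 ≤ 1 - α) (by linarith)).slope_anti_adjacent
    (Set.mem_Ici.2 (sub_nonneg.2 h₃)) (Set.mem_Ici.2 (by linarith : 0 ≤ t m - t (j - 1)))
    (sub_lt_sub_left h₂ (t m)) (sub_lt_sub_left h₁ (t m))
  simpa only [l1Weight, Nat.add_sub_cancel, sub_sub_sub_cancel_left] using hslope

lemma l1Weight_self (hα : α ≠ 1) (hτ : 0 < t m - t (m - 1)) :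
    l1Weight α t m m = (t m - t (m - 1)) ^ (-α) := by
  rw [l1Weight, sub_self, zero_rpow (sub_ne_zero.2 hα.symm), sub_zero,
    ← rpow_sub_one hτ.ne', sub_sub_cancel_left]

end l1Weight

lemma mul_le_l1_of_nonpos {α : ℝ} {t V : ℕ → ℝ} {m : ℕ} (hα₀ : 0 ≤ α) (hα₁ : α < 1)
    (hm : 1 ≤ m) (ht : StrictMonoOn t (Set.Iic m)) (hV : ∀ j < m, V j ≤ 0) :
    (t m - t (m - 1)) ^ (-α) / Gamma (2 - α) * V m ≤ l1 α t V m := by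
  have hmono : ∀ i j, i ≤ j → j ≤ m → t i ≤ t j := fun i j hij hj =>
    ht.monotoneOn (Set.mem_Iic.2 (hij.trans hj)) (Set.mem_Iic.2 hj) hij
  have hstep : ∀ j, 1 ≤ j → j ≤ m → t (j - 1) < t j := fun j h₁ h₂ =>
    ht (Set.mem_Iic.2 (by omega)) (Set.mem_Iic.2 h₂) (by omega)
  have hsum := mul_le_sum_mul_sub hm
    (l1Weight_nonneg hα₁.le (hmono 0 1 (by omega) hm) (hmono 1 m hm le_rfl))
    (fun j h₁ h₂ => l1Weight_le_succ hα₀ hα₁.le (hstep j h₁ (by omega))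
      (by simpa using hstep (j + 1) (by omega) (by omega)) (hmono (j + 1) m h₂ le_rfl))
    hV
  rw [l1_eq_sum_l1Weight hα₁, ← l1Weight_self hα₁.ne (sub_pos.2 (hstep m hm le_rfl)),
    div_mul_eq_mul_div, one_div_mul_eq_div]
  exact div_le_div_of_nonneg_right hsum (Gamma_pos_of_pos (by linarith)).le

lemma lt_rpow_neg_div_of_mul_rpow_lt {a x β g : ℝ} (hx : 0 < x) (h : a * x ^ β < 1 / g) :
    a < x ^ (-β) / g :=
  calc a = a * x ^ β * x ^ (-β) := by
        rw [mul_assoc, ← rpow_add hx, add_neg_cancel, rpow_zero, mul_one]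
    _ < 1 / g * x ^ (-β) := mul_lt_mul_of_pos_right h (rpow_pos_of_pos hx _)
    _ = x ^ (-β) / g := by ring

theorem stmt2_general (α lam0 lam1 : ℝ) (hα : α ∈ Set.Ioo (0:ℝ) 1)
    (hlam1 : 0 ≤ lam1)
    (M : ℕ) (t : ℕ → ℝ)
    (hmono : ∀ j, 1 ≤ j → j ≤ M → t (j - 1) < t j)
    (htau : ∀ j, 1 ≤ j → j ≤ M →
      lam0 * (t j - t (j - 1)) ^ α < 1 / Real.Gamma (2 - α))
    (V : ℕ → ℝ) (hV0 : V 0 ≤ 0)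
    (hV : ∀ m, 1 ≤ m → m ≤ M → l1 α t V m - lam0 * V m - lam1 * V (m - 1) ≤ 0) :
    ∀ m, m ≤ M → V m ≤ 0 := by
  have ht : StrictMonoOn t (Set.Iic M) :=
    strictMonoOn_Iic_of_lt_succ fun j hj => by simpa using hmono (j + 1) (by omega) hj
  intro m
  induction m using Nat.strong_induction_on with
  | _ m ih =>
  intro hmM
  rcases Nat.eq_zero_or_pos m with rfl | hm
  · exact hV0
  have hτ : 0 < t m - t (m - 1) := sub_pos.2 (hmono m hm hmM)
  have hlam0 := lt_rpow_neg_div_of_mul_rpow_lt hτ (htau m hm hmM)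
  have hl1 := mul_le_l1_of_nonpos hα.1.le hα.2 hm (ht.mono (Set.Iic_subset_Iic.2 hmM))
    fun j hj => ih j hj (by omega)
  have hprev := mul_nonpos_of_nonneg_of_nonpos hlam1 (ih (m - 1) (by omega) (by omega))
  nlinarith [hV m hm hmM]

/-- comparison principle for the discrete operator
`δ^α − lam0 − lam1`: if `V^0 ≤ 0` and `δ^α V^m − lam0 V^m − lam1 V^{m−1} ≤ 0`
for all `1 ≤ m ≤ M`, then `V^m ≤ 0` for all `m ≤ M`. -/
theorem stmt2 (α lam0 lam1 : ℝ) (hα : α ∈ Set.Ioo (0:ℝ) 1)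
    (hlam0 : 0 ≤ lam0) (hlam1 : 0 ≤ lam1)
    (T : ℝ) (hT : 0 < T) (M : ℕ) (t : ℕ → ℝ) (ht0 : t 0 = 0) (htT : t M = T)
    (hmono : ∀ j, 1 ≤ j → j ≤ M → t (j - 1) < t j)
    (htau : ∀ j, 1 ≤ j → j ≤ M →
      lam0 * (t j - t (j - 1)) ^ α < 1 / Real.Gamma (2 - α))
    (V : ℕ → ℝ) (hV0 : V 0 ≤ 0)
    (hV : ∀ m, 1 ≤ m → m ≤ M → l1 α t V m - lam0 * V m - lam1 * V (m - 1) ≤ 0) :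
    ∀ m, m ≤ M → V m ≤ 0 :=
  stmt2_general α lam0 lam1 hα hlam1 M t hmono htau V hV0 hV
end

section
/- (Existence of a discrete barrier.) Let α ∈ (0,1), λ ≥ 0, and let c₀ > 0 satisfy λ·Γ(2−α)·(2c₀)^α < 1. Fix a mesh point t_m with 0 ≤ t_m ≤ T and suppose τ_j ≤ c₀/2 for all 1 ≤ j ≤ M. Then there exists a nondecreasing sequence (B^j)_{j=0}^M and a constant C > 0 depending only on α, λ, c₀, and T, such that 0 ≤ B^j ≤ C for all j, B^j = 0 for all j ≤ m, and δ^α B^j − λ B^j ≥ Q^j for all 1 ≤ j ≤ M, where Q^j := 0 if t_j < t_m + c₀ and Q^j := 1 if t_j ≥ t_m + c₀. -/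
open Finset

section L1

variable {α : ℝ} {t : ℕ → ℝ} {M : ℕ}

lemma strictMonoOn_Iic_of_sub_one_lt {n : ℕ} (hinc : ∀ j, 1 ≤ j → j ≤ n → t (j - 1) < t j) :
    StrictMonoOn t (Set.Iic n) :=
  strictMonoOn_Iic_of_lt_succ fun i hi => by simpa using hinc (i + 1) (by omega) hi

lemma l1_congr {V W : ℕ → ℝ} {n : ℕ} (h : ∀ j ≤ n, V j = W j) :
    l1 α t V n = l1 α t W n := by
  unfold l1
  congr 1
  refine sum_congr rfl fun j hj => ?_
  have hjn := (mem_Icc.1 hj).2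
  rw [h j hjn, h (j - 1) (by omega)]

lemma l1_sum {ι : Type*} (s : Finset ι) (c : ι → ℝ) (V : ι → ℕ → ℝ) (n : ℕ) :
    l1 α t (fun j => ∑ k ∈ s, c k * V k j) n = ∑ k ∈ s, c k * l1 α t (V k) n := by
  simp only [l1, ← sum_sub_distrib, ← mul_sub, sum_div, sum_mul, mul_sum]
  rw [sum_comm]
  refine sum_congr rfl fun k _ => sum_congr rfl fun j _ => ?_
  ring

lemma integral_sub_rpow_neg (hα : α < 1) (c a b : ℝ) :
    ∫ s in a..b, (c - s) ^ (-α) = ((c - a) ^ (1 - α) - (c - b) ^ (1 - α)) / (1 - α) := by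
  rw [intervalIntegral.integral_comp_sub_left (fun x : ℝ => x ^ (-α)) c,
    integral_rpow (Or.inl (by linarith)), show -α + 1 = 1 - α by ring]

lemma l1_ramp (hα : α < 1) {b n : ℕ} (hbn : b ≤ n)
    (hinc : ∀ j, 1 ≤ j → j ≤ n → t (j - 1) < t j) :
    l1 α t (fun j => max (t j - t b) 0) n = (t n - t b) ^ (1 - α) / Real.Gamma (2 - α) := by
  have hmono := (strictMonoOn_Iic_of_sub_one_lt hinc).monotoneOn
  have hslope : ∀ j ∈ Icc 1 n, (max (t j - t b) 0 - max (t (j - 1) - t b) 0) / (t j - t (j - 1))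
      = if b < j then 1 else 0 := by
    intro j hj
    obtain ⟨hj1, hjn⟩ := mem_Icc.1 hj
    have hτ : t (j - 1) < t j := hinc j hj1 hjn
    split_ifs with hbj
    · have hb : t b ≤ t (j - 1) := hmono (by simp; omega) (by simp; omega) (by omega)
      rw [max_eq_left (by linarith), max_eq_left (by linarith), sub_sub_sub_cancel_right,
        div_self (by linarith)]
    · have hb : t j ≤ t b := hmono (by simp; omega) (by simp; omega) (by omega)
      rw [max_eq_right (by linarith), max_eq_right (by linarith), sub_self, zero_div]
  have hfilter : (Icc 1 n).filter (b < ·) = Ioc b n := by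
    ext j; simp only [mem_filter, mem_Icc, mem_Ioc]; omega
  have h1α : (1 - α) ≠ 0 := by linarith
  unfold l1
  rw [sum_congr rfl fun j hj => by rw [hslope j hj]]
  simp only [ite_mul, one_mul, zero_mul]
  rw [sum_ite, sum_const_zero, add_zero, hfilter]
  simp only [integral_sub_rpow_neg hα]
  rw [← sum_div, ← Ico_add_one_add_one_eq_Ioc, ← sum_Ico_add']
  simp only [Nat.add_sub_cancel]
  have htel : ∑ x ∈ Ico b n, ((t n - t x) ^ (1 - α) - (t n - t (x + 1)) ^ (1 - α))
      = (t n - t b) ^ (1 - α) := by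
    have h := sum_Ico_sub (fun x => (t n - t x) ^ (1 - α)) hbn
    simp only [sub_self, Real.zero_rpow h1α, zero_sub] at h
    rw [← neg_neg ((t n - t b) ^ (1 - α)), ← h, ← sum_neg_distrib]
    simp only [neg_sub]
  rw [htel, show (2 : ℝ) - α = 1 - α + 1 by ring, Real.Gamma_add_one h1α]
  field_simp

-- frozen after index `M`, beyond which the mesh `t` is arbitrary
def meshRamp (t : ℕ → ℝ) (M b j : ℕ) : ℝ := max (t (min j M) - t b) 0

lemma meshRamp_nonneg (b j : ℕ) : 0 ≤ meshRamp t M b j := le_max_right _ _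

lemma meshRamp_eq_zero {b j : ℕ} (h : t (min j M) ≤ t b) : meshRamp t M b j = 0 :=
  max_eq_right (sub_nonpos.2 h)

lemma meshRamp_mono (hmono : MonotoneOn t (Set.Iic M)) (b : ℕ) :
    Monotone (meshRamp t M b) := fun i j hij =>
  max_le_max_right 0 (sub_le_sub_right
    (hmono (min_le_right i M) (min_le_right j M) (min_le_min_right M hij)) _)

lemma meshRamp_le {b : ℕ} (hmono : MonotoneOn t (Set.Iic M)) (hb : b ≤ M) (j : ℕ) :
    meshRamp t M b j ≤ t M - t 0 := by
  have h1 : t (min j M) ≤ t M := hmono (min_le_right j M) (Set.mem_Iic.2 le_rfl) (min_le_right j M)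
  have h2 : t 0 ≤ t b := hmono (Nat.zero_le M) hb (Nat.zero_le b)
  have h3 : t b ≤ t M := hmono hb (Set.mem_Iic.2 le_rfl) hb
  exact max_le (by linarith) (by linarith)

lemma l1_meshRamp (hα : α < 1) {b n : ℕ} (hinc : ∀ j, 1 ≤ j → j ≤ M → t (j - 1) < t j)
    (hb : b ≤ M) (hn : n ≤ M) :
    l1 α t (meshRamp t M b) n = max (t n - t b) 0 ^ (1 - α) / Real.Gamma (2 - α) := by
  have hmono := (strictMonoOn_Iic_of_sub_one_lt hinc).monotoneOn
  rcases le_or_gt b n with hbn | hnb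
  · rw [l1_congr (W := fun j => max (t j - t b) 0)
        fun j hj => by rw [meshRamp, min_eq_left (hj.trans hn)],
      l1_ramp hα hbn fun j hj1 hjn => hinc j hj1 (hjn.trans hn),
      max_eq_left (sub_nonneg.2 (hmono (hbn.trans hn) hn hbn))]
  · have hzero : ∀ j ≤ n, meshRamp t M b j = 0 := fun j hj =>
      meshRamp_eq_zero (by rw [min_eq_left (hj.trans hn)]; exact hmono (hj.trans hn) hb (by omega))
    rw [l1_congr (W := fun _ => 0) hzero, max_eq_right (sub_nonpos.2 (hmono hn hb hnb.le)),
      Real.zero_rpow (by linarith)]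
    simp [l1]

noncomputable def rampExcess (α lam u : ℝ) : ℝ := u ^ (1 - α) / Real.Gamma (2 - α) - lam * u

lemma l1_sum_meshRamp_sub (hα : α < 1) (hinc : ∀ j, 1 ≤ j → j ≤ M → t (j - 1) < t j)
    {ι : Type*} (s : Finset ι) (c : ι → ℝ) {b : ι → ℕ} (hb : ∀ k, b k ≤ M) {n : ℕ} (hn : n ≤ M)
    (lam : ℝ) :
    l1 α t (fun j => ∑ k ∈ s, c k * meshRamp t M (b k) j) n
        - lam * ∑ k ∈ s, c k * meshRamp t M (b k) n
      = ∑ k ∈ s, c k * rampExcess α lam (max (t n - t (b k)) 0) := by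
  rw [l1_sum, mul_sum, ← sum_sub_distrib]
  refine sum_congr rfl fun k _ => ?_
  rw [l1_meshRamp hα hinc (hb k) hn, meshRamp, min_eq_left hn, rampExcess]
  ring

end L1

section FirstCrossing

variable {t : ℕ → ℝ} {M : ℕ} {s : ℝ}

-- `M` when no mesh point reaches `s`: a ramp starting at `t M` vanishes on the whole mesh
noncomputable def firstCrossing (t : ℕ → ℝ) (M : ℕ) (s : ℝ) : ℕ := sInf {i | s ≤ t i ∨ M ≤ i}

lemma firstCrossing_le (t : ℕ → ℝ) (M : ℕ) (s : ℝ) : firstCrossing t M s ≤ M :=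
  Nat.sInf_le (Or.inr le_rfl)

lemma le_firstCrossing_or_eq (t : ℕ → ℝ) (M : ℕ) (s : ℝ) :
    s ≤ t (firstCrossing t M s) ∨ firstCrossing t M s = M :=
  (Nat.sInf_mem (s := {i | s ≤ t i ∨ M ≤ i}) ⟨M, Or.inr le_rfl⟩).imp_right
    (le_antisymm (firstCrossing_le t M s))

lemma t_lt_of_lt_firstCrossing {i : ℕ} (hi : i < firstCrossing t M s) : t i < s := by
  have h := Nat.notMem_of_lt_sInf hi
  simp only [Set.mem_ofPred_eq, not_or, not_le] at h
  exact h.1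

lemma le_t_firstCrossing (hmono : MonotoneOn t (Set.Iic M)) {m : ℕ} (hm : m ≤ M) (hs : t m ≤ s) :
    t m ≤ t (firstCrossing t M s) := by
  rcases le_firstCrossing_or_eq t M s with h | h
  · exact hs.trans h
  · rw [h]; exact hmono hm (Set.mem_Iic.2 le_rfl) hm

lemma sub_t_firstCrossing_le (hmono : MonotoneOn t (Set.Iic M)) {n : ℕ} (hn : n ≤ M) :
    t n - t (firstCrossing t M s) ≤ max (t n - s) 0 := by
  rcases le_firstCrossing_or_eq t M s with h | h
  · exact le_max_of_le_left (by linarith)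
  · rw [h]; exact le_max_of_le_right (sub_nonpos.2 (hmono hn (Set.mem_Iic.2 le_rfl) hn))

lemma t_firstCrossing_le {h : ℝ} (h0 : t 0 ≤ s) (hh : 0 ≤ h)
    (hstep : ∀ j, 1 ≤ j → j ≤ M → t j - t (j - 1) ≤ h) :
    t (firstCrossing t M s) ≤ s + h := by
  rcases Nat.eq_zero_or_pos (firstCrossing t M s) with h₀ | hpos
  · rw [h₀]; linarith
  · have hprev := t_lt_of_lt_firstCrossing (t := t) (M := M) (s := s) (Nat.sub_one_lt hpos.ne')
    have := hstep _ hpos (firstCrossing_le t M s)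
    linarith

end FirstCrossing

section Excess

variable {α lam : ℝ}

lemma mul_rpow_div_le_rampExcess (hα0 : 0 ≤ α) (hα1 : α ≤ 1) (hlam : 0 ≤ lam) {u a : ℝ}
    (hu : 0 ≤ u) (hua : u ≤ a) :
    (1 - lam * Real.Gamma (2 - α) * a ^ α) * u ^ (1 - α) / Real.Gamma (2 - α)
      ≤ rampExcess α lam u := by
  have hΓ : 0 < Real.Gamma (2 - α) := Real.Gamma_pos_of_pos (by linarith)
  have hsplit : u = u ^ α * u ^ (1 - α) := by
    rw [← Real.rpow_add_of_nonneg hu hα0 (by linarith), add_sub_cancel, Real.rpow_one]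
  have hlin : lam * u ≤ lam * a ^ α * u ^ (1 - α) :=
    calc lam * u = lam * (u ^ α * u ^ (1 - α)) := by rw [← hsplit]
      _ ≤ lam * (a ^ α * u ^ (1 - α)) := mul_le_mul_of_nonneg_left
          (mul_le_mul_of_nonneg_right (Real.rpow_le_rpow hu hua hα0) (Real.rpow_nonneg hu _)) hlam
      _ = lam * a ^ α * u ^ (1 - α) := by ring
  have hexpand : (1 - lam * Real.Gamma (2 - α) * a ^ α) * u ^ (1 - α) / Real.Gamma (2 - α)
      = u ^ (1 - α) / Real.Gamma (2 - α) - lam * a ^ α * u ^ (1 - α) := by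
    field_simp
  rw [hexpand, rampExcess]
  linarith

lemma rampExcess_nonneg (hα0 : 0 ≤ α) (hα1 : α ≤ 1) (hlam : 0 ≤ lam) {u a : ℝ}
    (hθ : lam * Real.Gamma (2 - α) * a ^ α ≤ 1) (hu : 0 ≤ u) (hua : u ≤ a) :
    0 ≤ rampExcess α lam u :=
  (div_nonneg (mul_nonneg (sub_nonneg.2 hθ) (Real.rpow_nonneg hu _))
    (Real.Gamma_pos_of_pos (by linarith)).le).trans (mul_rpow_div_le_rampExcess hα0 hα1 hlam hu hua)

lemma neg_mul_le_rampExcess (hα1 : α ≤ 1) (hlam : 0 ≤ lam) {u T : ℝ} (hu : 0 ≤ u) (huT : u ≤ T) :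
    -(lam * T) ≤ rampExcess α lam u := by
  have h1 : 0 ≤ u ^ (1 - α) / Real.Gamma (2 - α) :=
    div_nonneg (Real.rpow_nonneg hu _) (Real.Gamma_pos_of_pos (by linarith)).le
  have h2 : lam * u ≤ lam * T := mul_le_mul_of_nonneg_left huT hlam
  rw [rampExcess]
  linarith

noncomputable def barrierGap (α lam c₀ : ℝ) : ℝ :=
  (1 - lam * Real.Gamma (2 - α) * (2 * c₀) ^ α) * (c₀ / 2) ^ (1 - α) / Real.Gamma (2 - α)

lemma barrierGap_pos (hα1 : α ≤ 1) {c₀ : ℝ} (hc₀ : 0 < c₀)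
    (hsmall : lam * Real.Gamma (2 - α) * (2 * c₀) ^ α < 1) : 0 < barrierGap α lam c₀ :=
  div_pos (mul_pos (sub_pos.2 hsmall) (Real.rpow_pos_of_pos (by linarith) _))
    (Real.Gamma_pos_of_pos (by linarith))

lemma barrierGap_le_rampExcess (hα0 : 0 ≤ α) (hα1 : α ≤ 1) (hlam : 0 ≤ lam) {c₀ u : ℝ}
    (hc₀ : 0 ≤ c₀) (hsmall : lam * Real.Gamma (2 - α) * (2 * c₀) ^ α ≤ 1)
    (hlow : c₀ / 2 ≤ u) (hup : u ≤ 2 * c₀) : barrierGap α lam c₀ ≤ rampExcess α lam u := by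
  refine le_trans ?_ (mul_rpow_div_le_rampExcess hα0 hα1 hlam (by linarith) hup)
  exact div_le_div_of_nonneg_right (mul_le_mul_of_nonneg_left
    (Real.rpow_le_rpow (by linarith) hlow (by linarith)) (sub_nonneg.2 hsmall))
    (Real.Gamma_pos_of_pos (by linarith)).le

end Excess

lemma half_le_sum_pow_mul {x : ℕ → ℝ} {ρ G L : ℝ} {k₀ N : ℕ} (hρ : 1 < ρ) (hG : 0 ≤ G)
    (hL : 2 * L ≤ (ρ - 1) * G) (hk₀ : k₀ ≤ N) (hlow : ∀ k < k₀, -L ≤ x k) (hmid : G ≤ x k₀)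
    (hhigh : ∀ k, k₀ < k → k ≤ N → 0 ≤ x k) :
    G / 2 ≤ ∑ k ∈ range (N + 1), ρ ^ k * x k := by
  have hρ0 : 0 ≤ ρ := by linarith
  have hpow : 1 ≤ ρ ^ k₀ := one_le_pow₀ hρ.le
  have hLρ : L / (ρ - 1) ≤ G / 2 := by rw [div_le_iff₀ (by linarith)]; linarith
  have hbelow : -(G / 2 * (ρ ^ k₀ - 1)) ≤ ∑ k ∈ range k₀, ρ ^ k * x k :=
    calc -(G / 2 * (ρ ^ k₀ - 1)) ≤ -(L / (ρ - 1) * (ρ ^ k₀ - 1)) :=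
          neg_le_neg (mul_le_mul_of_nonneg_right hLρ (by linarith))
      _ = ∑ k ∈ range k₀, ρ ^ k * -L := by
          rw [← sum_mul, geom_sum_eq hρ.ne' k₀]; ring
      _ ≤ ∑ k ∈ range k₀, ρ ^ k * x k :=
          sum_le_sum fun k hk =>
            mul_le_mul_of_nonneg_left (hlow k (mem_range.1 hk)) (pow_nonneg hρ0 k)
  calc G / 2 ≤ ∑ k ∈ range (k₀ + 1), ρ ^ k * x k := by
        rw [sum_range_succ]
        nlinarith [mul_le_mul_of_nonneg_left hmid (pow_nonneg hρ0 k₀)]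
    _ ≤ ∑ k ∈ range (N + 1), ρ ^ k * x k :=
        sum_le_sum_of_subset_of_nonneg (range_subset_range.2 (by omega)) fun k hk hk' => by
          rw [mem_range] at hk hk'
          exact mul_nonneg (pow_nonneg hρ0 k) (hhigh k (by omega) (by omega))

section Barrier

variable {α lam c₀ T d : ℝ} {u : ℕ → ℝ}

noncomputable def barrierWeight (α lam c₀ T : ℝ) (k : ℕ) : ℝ :=
  2 / barrierGap α lam c₀ * (2 + 2 * lam * T / barrierGap α lam c₀) ^ k

lemma barrierWeight_pos (hα1 : α ≤ 1) (hlam : 0 ≤ lam) (hc₀ : 0 < c₀)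
    (hsmall : lam * Real.Gamma (2 - α) * (2 * c₀) ^ α < 1) (hT : 0 ≤ T) (k : ℕ) :
    0 < barrierWeight α lam c₀ T k := by
  have := barrierGap_pos hα1 hc₀ hsmall
  unfold barrierWeight
  positivity

lemma one_le_sum_rampExcess (hα0 : 0 ≤ α) (hα1 : α ≤ 1) (hlam : 0 ≤ lam) (hc₀ : 0 < c₀)
    (hsmall : lam * Real.Gamma (2 - α) * (2 * c₀) ^ α < 1) (hcd : c₀ ≤ d) (hdT : d ≤ T)
    (hu0 : ∀ k, 0 ≤ u k) (hlow : ∀ k : ℕ, d - k * c₀ - c₀ / 2 ≤ u k)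
    (hup : ∀ k : ℕ, u k ≤ max (d - k * c₀) 0) :
    1 ≤ ∑ k ∈ range (⌊T / c₀⌋₊ + 1), barrierWeight α lam c₀ T k * rampExcess α lam (u k) := by
  unfold barrierWeight
  set G := barrierGap α lam c₀
  have hG : 0 < G := barrierGap_pos hα1 hc₀ hsmall
  have hlamT : 0 ≤ 2 * lam * T / G := div_nonneg (mul_nonneg (by linarith) (by linarith)) hG.le
  -- the level `t_m + k₀ c₀` of ramp `k₀` lies in `(d - 2 c₀, d - c₀]`, so `u k₀ ∈ [c₀/2, 2 c₀]`
  set k₀ := ⌊d / c₀ - 1⌋₊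
  have hk₀ : (k₀ + 1) * c₀ ≤ d := by
    have := Nat.floor_le (sub_nonneg.2 ((one_le_div hc₀).2 hcd))
    rw [← le_div_iff₀ hc₀]; linarith
  have hk₀' : d < (k₀ + 2) * c₀ := by
    have := Nat.lt_floor_add_one (d / c₀ - 1)
    rw [← div_lt_iff₀ hc₀]; linarith
  have hk₀N : k₀ ≤ ⌊T / c₀⌋₊ :=
    Nat.floor_le_floor (by linarith [div_le_div_of_nonneg_right hdT hc₀.le])
  have huT : ∀ k, u k ≤ T := fun k =>
    (hup k).trans (max_le (by nlinarith [(Nat.cast_nonneg k : (0 : ℝ) ≤ k)]) (by linarith))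
  have hlate : ∀ k, k₀ < k → u k ≤ 2 * c₀ := fun k hk => by
    have : (k₀ : ℝ) + 1 ≤ k := by exact_mod_cast hk
    exact (hup k).trans (max_le (by nlinarith) (by linarith))
  have hsum := half_le_sum_pow_mul (x := fun k => rampExcess α lam (u k)) (L := lam * T)
    (G := G) (ρ := 2 + 2 * lam * T / G) (by linarith) hG.le (by field_simp; linarith) hk₀N
    (fun k _ => neg_mul_le_rampExcess hα1 hlam (hu0 k) (huT k))
    (barrierGap_le_rampExcess hα0 hα1 hlam hc₀.le hsmall.le (by linarith [hlow k₀])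
      ((hup k₀).trans (max_le (by linarith) (by linarith))))
    (fun k hk _ => rampExcess_nonneg hα0 hα1 hlam hsmall.le (hu0 k) (hlate k hk))
  simp_rw [mul_assoc (2 / G), ← mul_sum]
  calc (1 : ℝ) = 2 / G * (G / 2) := by field_simp
    _ ≤ _ := mul_le_mul_of_nonneg_left hsum (by positivity)

lemma ite_le_sum_rampExcess (hα0 : 0 ≤ α) (hα1 : α ≤ 1) (hlam : 0 ≤ lam) (hc₀ : 0 < c₀)
    (hsmall : lam * Real.Gamma (2 - α) * (2 * c₀) ^ α < 1) (hT : 0 ≤ T) (hdT : d ≤ T)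
    (hu0 : ∀ k, 0 ≤ u k) (hlow : ∀ k : ℕ, d - k * c₀ - c₀ / 2 ≤ u k)
    (hup : ∀ k : ℕ, u k ≤ max (d - k * c₀) 0) :
    (if d < c₀ then 0 else 1)
      ≤ ∑ k ∈ range (⌊T / c₀⌋₊ + 1), barrierWeight α lam c₀ T k * rampExcess α lam (u k) := by
  split_ifs with hd
  · refine sum_nonneg fun k _ => mul_nonneg (barrierWeight_pos hα1 hlam hc₀ hsmall hT k).le
      (rampExcess_nonneg hα0 hα1 hlam hsmall.le (hu0 k) ((hup k).trans (max_le ?_ (by linarith))))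
    nlinarith [(Nat.cast_nonneg k : (0 : ℝ) ≤ k)]
  · exact one_le_sum_rampExcess hα0 hα1 hlam hc₀ hsmall (not_lt.1 hd) hdT hu0 hlow hup

end Barrier

section RampBarrier

variable {α lam c₀ T : ℝ} {t : ℕ → ℝ} {M m : ℕ}

noncomputable def rampBarrier (α lam c₀ T : ℝ) (t : ℕ → ℝ) (M m j : ℕ) : ℝ :=
  ∑ k ∈ range (⌊T / c₀⌋₊ + 1),
    barrierWeight α lam c₀ T k * meshRamp t M (firstCrossing t M (t m + k * c₀)) j

lemma rampBarrier_mono (hmono : MonotoneOn t (Set.Iic M))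
    (hw : ∀ k, 0 ≤ barrierWeight α lam c₀ T k) : Monotone (rampBarrier α lam c₀ T t M m) :=
  fun _ _ hij => sum_le_sum fun k _ =>
    mul_le_mul_of_nonneg_left (meshRamp_mono hmono _ hij) (hw k)

lemma rampBarrier_nonneg (hw : ∀ k, 0 ≤ barrierWeight α lam c₀ T k) (j : ℕ) :
    0 ≤ rampBarrier α lam c₀ T t M m j :=
  sum_nonneg fun k _ => mul_nonneg (hw k) (meshRamp_nonneg _ _)

lemma rampBarrier_le (hmono : MonotoneOn t (Set.Iic M))
    (hw : ∀ k, 0 ≤ barrierWeight α lam c₀ T k) (j : ℕ) :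
    rampBarrier α lam c₀ T t M m j
      ≤ (∑ k ∈ range (⌊T / c₀⌋₊ + 1), barrierWeight α lam c₀ T k) * (t M - t 0) := by
  rw [sum_mul]
  exact sum_le_sum fun k _ =>
    mul_le_mul_of_nonneg_left (meshRamp_le hmono (firstCrossing_le t M _) j) (hw k)

lemma rampBarrier_eq_zero (hc₀ : 0 ≤ c₀) (hmono : MonotoneOn t (Set.Iic M)) (hmM : m ≤ M) {j : ℕ}
    (hj : j ≤ m) :
    rampBarrier α lam c₀ T t M m j = 0 := by
  refine sum_eq_zero fun k _ => ?_
  rw [meshRamp_eq_zero, mul_zero]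
  rw [min_eq_left (hj.trans hmM)]
  exact (hmono (hj.trans hmM) hmM hj).trans
    (le_t_firstCrossing hmono hmM (le_add_of_nonneg_right (by positivity)))

lemma ite_le_l1_sub_mul_rampBarrier (hα0 : 0 ≤ α) (hα1 : α < 1) (hlam : 0 ≤ lam) (hc₀ : 0 < c₀)
    (hsmall : lam * Real.Gamma (2 - α) * (2 * c₀) ^ α < 1) (ht0 : t 0 = 0) (htM : t M = T)
    (hinc : ∀ j, 1 ≤ j → j ≤ M → t (j - 1) < t j)
    (hstep : ∀ j, 1 ≤ j → j ≤ M → t j - t (j - 1) ≤ c₀ / 2) (hmM : m ≤ M) {n : ℕ} (hnM : n ≤ M) :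
    (if t n < t m + c₀ then 0 else 1)
      ≤ l1 α t (rampBarrier α lam c₀ T t M m) n - lam * rampBarrier α lam c₀ T t M m n := by
  have hmono := (strictMonoOn_Iic_of_sub_one_lt hinc).monotoneOn
  have hT : 0 ≤ T := htM ▸ ht0 ▸ hmono (Nat.zero_le M) (Set.mem_Iic.2 le_rfl) (Nat.zero_le M)
  have htn : t n ≤ T := htM ▸ hmono hnM (Set.mem_Iic.2 le_rfl) hnM
  have htm : 0 ≤ t m := ht0 ▸ hmono (Nat.zero_le M) hmM (Nat.zero_le m)
  have hlevel : ∀ k : ℕ, t m ≤ t m + k * c₀ := fun k => le_add_of_nonneg_right (by positivity)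
  unfold rampBarrier
  rw [l1_sum_meshRamp_sub hα1 hinc _ _ (fun k => firstCrossing_le t M _) hnM]
  simpa only [sub_lt_iff_lt_add'] using ite_le_sum_rampExcess (d := t n - t m)
    hα0 hα1.le hlam hc₀ hsmall hT (by linarith) (fun k => le_max_right _ _)
    (fun k => le_max_of_le_left (by
      linarith [t_firstCrossing_le (M := M) (ht0 ▸ htm.trans (hlevel k)) (by positivity) hstep]))
    (fun k => max_le ((sub_t_firstCrossing_le hmono hnM).trans_eq (by rw [sub_add_eq_sub_sub]))
      (le_max_right _ _))

end RampBarrier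

/-- existence of a discrete barrier `B` with `B^j = 0` for `j ≤ m`,
`0 ≤ B^j ≤ C`, `B` nondecreasing, and `δ^α B^j − λ B^j ≥ Q^j`, where `Q^j = 1`
for `t_j ≥ t_m + c₀` and `Q^j = 0` otherwise. -/
theorem stmt3 (α lam c₀ T : ℝ) (hα : α ∈ Set.Ioo (0:ℝ) 1) (hlam : 0 ≤ lam)
    (hc₀ : 0 < c₀) (hsmall : lam * Real.Gamma (2 - α) * (2 * c₀) ^ α < 1)
    (hT : 0 < T) :
    ∃ C : ℝ, 0 < C ∧
    ∀ (M : ℕ) (t : ℕ → ℝ), t 0 = 0 → t M = T →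
      (∀ j, 1 ≤ j → j ≤ M → t (j - 1) < t j) →
      (∀ j, 1 ≤ j → j ≤ M → t j - t (j - 1) ≤ c₀ / 2) →
      ∀ m : ℕ, m ≤ M →
      ∃ B : ℕ → ℝ,
        (∀ j k, j ≤ k → B j ≤ B k) ∧
        (∀ j, 0 ≤ B j ∧ B j ≤ C) ∧
        (∀ j, j ≤ m → B j = 0) ∧
        (∀ j, 1 ≤ j → j ≤ M →
          l1 α t B j - lam * B j ≥ (if t j < t m + c₀ then (0:ℝ) else 1)) := by
  obtain ⟨hα0, hα1⟩ := hα
  have hw := barrierWeight_pos hα1.le hlam hc₀ hsmall hT.le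
  refine ⟨(∑ k ∈ range (⌊T / c₀⌋₊ + 1), barrierWeight α lam c₀ T k) * T,
    mul_pos (sum_pos (fun k _ => hw k) nonempty_range_add_one) hT, ?_⟩
  intro M t ht0 htM hinc hstep m hmM
  have hmono := (strictMonoOn_Iic_of_sub_one_lt hinc).monotoneOn
  refine ⟨rampBarrier α lam c₀ T t M m, rampBarrier_mono hmono (fun k => (hw k).le),
    fun j => ⟨rampBarrier_nonneg (fun k => (hw k).le) j, ?_⟩,
    fun j hj => rampBarrier_eq_zero hc₀.le hmono hmM hj,
    fun n _ hnM =>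
      ite_le_l1_sub_mul_rampBarrier hα0.le hα1 hlam hc₀ hsmall ht0 htM hinc hstep hmM hnM⟩
  simpa only [ht0, htM, sub_zero] using rampBarrier_le hmono (fun k => (hw k).le) j
end

section
/- Let α ∈ (0,1), β := 1 − α, and t_n > 0. Define B(s) := s·t_n^{−β−1} for 0 ≤ s ≤ t_n and B(s) := s^{−β} for s ≥ t_n. Then the Caputo derivative ∂^α B(t) = (1/Γ(1−α)) ∫_0^t (t−s)^{−α} B′(s) ds satisfies: Γ(β)·∂^α B(t) ≥ β·(t_n/t)^{α}·t^{−1} for all t > t_n, and Γ(β)·∂^α B(t) ≥ β^{−1}·(t/t_n)^{β}·t_n^{−1} ≥ 0 for all 0 < t ≤ t_n. -/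
/-- The Caputo fractional derivative of order `α`. -/
noncomputable def caputo (α : ℝ) (v : ℝ → ℝ) (t : ℝ) : ℝ :=
  (1 / Real.Gamma (1 - α)) * ∫ s in (0:ℝ)..t, (t - s) ^ (-α) * deriv v s

/-! For `β = 1 - α`, the factor `Γ(1 - α)` cancels the normalisation of the Caputo derivative and
leaves `∫₀ᵗ (t - s)^(β-1) B'(s) ds`. For `t ≤ tn` the derivative `B'` is constant and the integral
is explicit. For `t > tn` the integrand on `(tn, t)` is `-β (t - s)^(β-1) s^(-β-1)`, which has the
primitive `-β (t - s)^β s^(-β) / (β t)`; the resulting closed form is decreasing and affine in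
`(t - tn)^β`, and Bernoulli's inequality `(t - tn)^β ≤ t^β - β tn t^(β-1)` turns it into the
stated lower bound. -/

open Real Set MeasureTheory intervalIntegral

theorem sub_rpow_le_rpow_sub_mul {a t β : ℝ} (ht : 0 < t) (hat : a ≤ t)
    (hβ0 : 0 ≤ β) (hβ1 : β ≤ 1) : (t - a) ^ β ≤ t ^ β - β * a * t ^ (β - 1) := by
  have hat' : a / t ≤ 1 := (div_le_one ht).2 hat
  have hbern := rpow_one_add_le_one_add_mul_self (s := -(a / t)) (by linarith) hβ0 hβ1
  calc (t - a) ^ β = t ^ β * (1 + -(a / t)) ^ β := by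
        rw [← mul_rpow ht.le (by linarith)]
        congr 1; field_simp; ring
    _ ≤ t ^ β * (1 + β * -(a / t)) := by gcongr
    _ = t ^ β - β * a * t ^ (β - 1) := by rw [rpow_sub_one ht.ne']; field_simp; ring

theorem intervalIntegrable_sub_rpow_sub_one {β : ℝ} (hβ : 0 < β) (t a b : ℝ) :
    IntervalIntegrable (fun s => (t - s) ^ (β - 1)) volume a b := by
  simpa using ((intervalIntegrable_rpow' (a := t - a) (b := t - b)
    (by linarith : -1 < β - 1)).comp_sub_left t)

theorem integral_sub_rpow_sub_one {β : ℝ} (hβ : 0 < β) (t a b : ℝ) :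
    ∫ s in a..b, (t - s) ^ (β - 1) = ((t - a) ^ β - (t - b) ^ β) / β := by
  rw [integral_comp_sub_left (fun s => s ^ (β - 1)) t, integral_rpow (Or.inl (by linarith)),
    sub_add_cancel]

theorem hasDerivAt_sub_rpow_mul_rpow_neg {β s t : ℝ} (hs : 0 < s) (hst : s < t) :
    HasDerivAt (fun s => (t - s) ^ β * s ^ (-β))
      (-(β * t) * ((t - s) ^ (β - 1) * s ^ (-β - 1))) s := by
  have hts : 0 < t - s := by linarith
  have h₁ : HasDerivAt (fun s => (t - s) ^ β) (β * (t - s) ^ (β - 1) * (0 - 1)) s :=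
    (hasDerivAt_rpow_const (Or.inl hts.ne')).comp s ((hasDerivAt_const s t).sub (hasDerivAt_id s))
  refine (h₁.mul (hasDerivAt_rpow_const (p := -β) (Or.inl hs.ne'))).congr_deriv ?_
  rw [rpow_sub_one hs.ne', rpow_sub_one hts.ne']
  field_simp
  ring

theorem intervalIntegrable_sub_rpow_mul_rpow_neg {β a b : ℝ} (hβ : 0 < β) (ha : 0 < a)
    (hb : 0 < b) (t : ℝ) :
    IntervalIntegrable (fun s => (t - s) ^ (β - 1) * s ^ (-β - 1)) volume a b := by
  refine (intervalIntegrable_sub_rpow_sub_one hβ t a b).mul_continuousOn fun s hs => ?_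
  have hs0 : 0 < s := (lt_min ha hb).trans_le hs.1
  exact (continuousAt_rpow_const _ _ (Or.inl hs0.ne')).continuousWithinAt

theorem integral_sub_rpow_mul_rpow_neg {β a t : ℝ} (hβ : 0 < β) (ha : 0 < a) (hat : a ≤ t) :
    ∫ s in a..t, (t - s) ^ (β - 1) * s ^ (-β - 1) = (t - a) ^ β * a ^ (-β) / (β * t) := by
  have ht : 0 < t := ha.trans_le hat
  have hcont : ContinuousOn (fun s => (t - s) ^ β * s ^ (-β)) (Icc a t) := fun s hs =>
    (((continuousAt_rpow_const _ _ (Or.inr hβ.le)).comp (continuousAt_id.const_sub t)).mul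
      (continuousAt_rpow_const _ _ (Or.inl (ha.trans_le hs.1).ne'))).continuousWithinAt
  have hftc := integral_eq_sub_of_hasDerivAt_of_le hat hcont
    (fun s hs => hasDerivAt_sub_rpow_mul_rpow_neg (ha.trans hs.1) hs.2)
    ((intervalIntegrable_sub_rpow_mul_rpow_neg hβ ha ht t).const_mul (-(β * t)))
  rw [intervalIntegral.integral_const_mul, sub_self, zero_rpow hβ.ne', zero_mul] at hftc
  field_simp
  linarith

noncomputable def barrier (β tn s : ℝ) : ℝ := if s ≤ tn then s * tn ^ (-β - 1) else s ^ (-β)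

theorem deriv_barrier_of_lt {β tn s : ℝ} (hs : s < tn) :
    deriv (barrier β tn) s = tn ^ (-β - 1) := by
  have h : barrier β tn =ᶠ[nhds s] fun s => s * tn ^ (-β - 1) := by
    filter_upwards [Iio_mem_nhds hs] with x hx
    simp [barrier, (mem_Iio.1 hx).le]
  rw [h.deriv_eq]
  simp

theorem deriv_barrier_of_gt {β tn s : ℝ} (hs : tn < s) :
    deriv (barrier β tn) s = -β * s ^ (-β - 1) := by
  have h : barrier β tn =ᶠ[nhds s] fun s => s ^ (-β) := by
    filter_upwards [Ioi_mem_nhds hs] with x hx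
    simp [barrier, not_le.2 (mem_Ioi.1 hx)]
  rw [h.deriv_eq, Real.deriv_rpow_const]

theorem integral_barrier_of_le {β tn t : ℝ} (hβ : 0 < β) (htn : 0 < tn) (ht : 0 ≤ t)
    (htle : t ≤ tn) :
    ∫ s in (0:ℝ)..t, (t - s) ^ (β - 1) * deriv (barrier β tn) s = β⁻¹ * (t / tn) ^ β * tn⁻¹ := by
  have h : EqOn (fun s => (t - s) ^ (β - 1) * deriv (barrier β tn) s)
      (fun s => (t - s) ^ (β - 1) * tn ^ (-β - 1)) (uIoo 0 t) := by
    intro s hs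
    rw [uIoo_of_le ht] at hs
    simp only [deriv_barrier_of_lt (hs.2.trans_le htle)]
  rw [integral_congr_uIoo h, intervalIntegral.integral_mul_const, integral_sub_rpow_sub_one hβ,
    sub_zero, sub_self, zero_rpow hβ.ne', div_rpow ht htn.le, rpow_sub_one htn.ne', rpow_neg htn.le]
  ring

theorem integral_barrier_of_lt {β tn t : ℝ} (hβ : 0 < β) (htn : 0 < tn) (ht : tn < t) :
    ∫ s in (0:ℝ)..t, (t - s) ^ (β - 1) * deriv (barrier β tn) s
      = tn ^ (-β - 1) * (t ^ β - (t - tn) ^ β) / β - (t - tn) ^ β * tn ^ (-β) / t := by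
  set f := fun s => (t - s) ^ (β - 1) * deriv (barrier β tn) s
  have h₁ : EqOn f (fun s => (t - s) ^ (β - 1) * tn ^ (-β - 1)) (uIoo 0 tn) := by
    intro s hs
    rw [uIoo_of_le htn.le] at hs
    simp only [f, deriv_barrier_of_lt hs.2]
  have h₂ : EqOn f (fun s => -β * ((t - s) ^ (β - 1) * s ^ (-β - 1))) (uIoo tn t) := by
    intro s hs
    rw [uIoo_of_le ht.le] at hs
    simp only [f, deriv_barrier_of_gt hs.1]
    ring
  have hint₁ : IntervalIntegrable f volume 0 tn :=
    ((intervalIntegrable_sub_rpow_sub_one hβ t 0 tn).mul_const _).congr_uIoo h₁.symm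
  have hint₂ : IntervalIntegrable f volume tn t :=
    ((intervalIntegrable_sub_rpow_mul_rpow_neg hβ htn (htn.trans ht) t).const_mul (-β)).congr_uIoo
      h₂.symm
  rw [← integral_add_adjacent_intervals hint₁ hint₂, integral_congr_uIoo h₁,
    integral_congr_uIoo h₂, intervalIntegral.integral_mul_const, intervalIntegral.integral_const_mul,
    integral_sub_rpow_sub_one hβ, integral_sub_rpow_mul_rpow_neg hβ htn ht.le, sub_zero]
  field_simp
  ring

theorem le_integral_barrier_of_lt {β tn t : ℝ} (hβ0 : 0 < β) (hβ1 : β ≤ 1) (htn : 0 < tn)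
    (ht : tn < t) :
    β * (tn / t) ^ (1 - β) * t⁻¹
      ≤ ∫ s in (0:ℝ)..t, (t - s) ^ (β - 1) * deriv (barrier β tn) s := by
  have ht0 : 0 < t := htn.trans ht
  have hbern := sub_rpow_le_rpow_sub_mul ht0 ht.le hβ0.le hβ1
  rw [integral_barrier_of_lt hβ0 htn ht, rpow_sub (div_pos htn ht0), rpow_one,
    div_rpow htn.le ht0.le, rpow_sub_one htn.ne', rpow_neg htn.le]
  rw [rpow_sub_one ht0.ne'] at hbern
  have hgap : 0 ≤ t ^ β - β * tn * (t ^ β / t) - (t - tn) ^ β := sub_nonneg.2 hbern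
  calc β * (tn / t / (tn ^ β / t ^ β)) * t⁻¹
      ≤ β * (tn / t / (tn ^ β / t ^ β)) * t⁻¹
        + (t ^ β - β * tn * (t ^ β / t) - (t - tn) ^ β) * ((β * tn)⁻¹ + t⁻¹) / tn ^ β :=
        le_add_of_nonneg_right (by positivity)
    _ = (tn ^ β)⁻¹ / tn * (t ^ β - (t - tn) ^ β) / β - (t - tn) ^ β * (tn ^ β)⁻¹ / t := by
        have : 0 < tn ^ β := rpow_pos_of_pos htn β
        field_simp
        ring

theorem Gamma_mul_caputo {α : ℝ} (hα : α < 1) (v : ℝ → ℝ) (t : ℝ) :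
    Gamma (1 - α) * caputo α v t = ∫ s in (0:ℝ)..t, (t - s) ^ ((1 - α) - 1) * deriv v s := by
  rw [caputo, ← mul_assoc, mul_one_div_cancel (Gamma_pos_of_pos (by linarith)).ne', one_mul,
    sub_sub_cancel_left]

/-- lower bounds for the Caputo derivative of the barrier function
`B(s) = s t_n^{−β−1}` for `s ≤ t_n`, `B(s) = s^{−β}` for `s ≥ t_n`, `β = 1 − α`. -/
theorem stmt6 (α : ℝ) (hα : α ∈ Set.Ioo (0:ℝ) 1) (tn : ℝ) (htn : 0 < tn) :
    (∀ t, tn < t →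
      Real.Gamma (1 - α) *
          caputo α (fun s => if s ≤ tn then s * tn ^ (-(1 - α) - 1) else s ^ (-(1 - α))) t
        ≥ (1 - α) * (tn / t) ^ α * t⁻¹) ∧
    (∀ t, 0 < t → t ≤ tn →
      Real.Gamma (1 - α) *
          caputo α (fun s => if s ≤ tn then s * tn ^ (-(1 - α) - 1) else s ^ (-(1 - α))) t
        ≥ (1 - α)⁻¹ * (t / tn) ^ (1 - α) * tn⁻¹ ∧
      (0:ℝ) ≤ (1 - α)⁻¹ * (t / tn) ^ (1 - α) * tn⁻¹) := by
  obtain ⟨hα0, hα1⟩ := hα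
  have hβ : 0 < 1 - α := by linarith
  simp only [Gamma_mul_caputo hα1]
  refine ⟨fun t ht => ?_, fun t ht0 htle => ⟨?_, by positivity⟩⟩
  · have h := le_integral_barrier_of_lt hβ (by linarith) htn ht
    rw [sub_sub_cancel] at h
    exact h
  · exact (integral_barrier_of_le hβ htn ht0.le htle).ge
end

section
/- (Interpolation error on the first mesh interval.) Let σ ∈ (0,1) ∪ (1,2), t₁ > 0, and C > 0. Let u : [0,t₁] → ℝ be continuous, twice continuously differentiable on (0,t₁], with |u′(t)| ≤ C(1 + t^{σ−1}) and |u″(t)| ≤ C·t^{σ−2} for all t ∈ (0,t₁]. Let u^I be the affine function with u^I(0) = u(0) and u^I(t₁) = u(t₁). Then there is a constant C′ > 0, depending only on C and σ, such that |u(s) − u^I(s)| ≤ C′·(t₁ − s)·(s^{σ−1} + t₁^{σ−1}) for all s ∈ (0, t₁). -/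
/-!
Put `m = u'(s)`. The interpolation error at `s` equals `(1 - s/t₁) A - (s/t₁) B`, where
`A = u(s) - u(0) - m s` and `B = u(t₁) - u(s) - m (t₁ - s)` are the first-order Taylor
remainders of `u` at `s` towards the two endpoints. Comparing `u'` with an antiderivative of
`C τ^(σ-2)` gives `|u'(y) - u'(x)| ≤ C/|σ-1| (x^(σ-1) + y^(σ-1))`; the right-hand side is
integrable at `0` because `σ > 0`, which yields `|A| ≲ s^σ ≤ t₁ s^(σ-1)` and
`|B| ≲ (s^(σ-1) + t₁^(σ-1)) (t₁ - s)`.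
-/

open Set

theorem sub_le_sub_of_hasDerivAt_le {f g f' g' : ℝ → ℝ} {a b : ℝ} (hab : a ≤ b)
    (hf : ContinuousOn f (Icc a b)) (hg : ContinuousOn g (Icc a b))
    (hf' : ∀ x ∈ Ioo a b, HasDerivAt f (f' x) x) (hg' : ∀ x ∈ Ioo a b, HasDerivAt g (g' x) x)
    (hbound : ∀ x ∈ Ioo a b, f' x ≤ g' x) :
    f b - f a ≤ g b - g a := by
  have mono : MonotoneOn (g - f) (Icc a b) := by
    refine monotoneOn_of_hasDerivWithinAt_nonneg (convex_Icc a b) (hg.sub hf)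
      (f' := g' - f') (fun x hx => ?_) (fun x hx => ?_) <;> rw [interior_Icc] at hx
    · exact ((hg' x hx).sub (hf' x hx)).hasDerivWithinAt
    · exact sub_nonneg.2 (hbound x hx)
  have := mono (left_mem_Icc.2 hab) (right_mem_Icc.2 hab) hab
  simp only [Pi.sub_apply] at this
  linarith

theorem abs_sub_le_sub_of_abs_hasDerivAt_le {f g f' g' : ℝ → ℝ} {a b : ℝ} (hab : a ≤ b)
    (hf : ContinuousOn f (Icc a b)) (hg : ContinuousOn g (Icc a b))
    (hf' : ∀ x ∈ Ioo a b, HasDerivAt f (f' x) x) (hg' : ∀ x ∈ Ioo a b, HasDerivAt g (g' x) x)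
    (hbound : ∀ x ∈ Ioo a b, |f' x| ≤ g' x) :
    |f b - f a| ≤ g b - g a := by
  refine abs_sub_le_iff.2 ⟨?_, ?_⟩
  · exact sub_le_sub_of_hasDerivAt_le hab hf hg hf' hg' fun x hx =>
      (le_abs_self _).trans (hbound x hx)
  · have := sub_le_sub_of_hasDerivAt_le hab hf.neg hg (fun x hx => (hf' x hx).neg) hg'
      fun x hx => (neg_le_abs _).trans (hbound x hx)
    simp only [Pi.neg_apply] at this
    linarith

theorem rpow_le_rpow_add_rpow_of_mem_Icc {x y τ : ℝ} (hx : 0 < x) (hτ : τ ∈ Icc x y) (p : ℝ) :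
    τ ^ p ≤ x ^ p + y ^ p := by
  have hx' := Real.rpow_nonneg hx.le p
  have hy' := Real.rpow_nonneg (hx.le.trans (hτ.1.trans hτ.2)) p
  rcases le_total p 0 with hp | hp
  · linarith [Real.rpow_le_rpow_of_nonpos hx hτ.1 hp]
  · linarith [Real.rpow_le_rpow (hx.le.trans hτ.1) hτ.2 hp]

theorem abs_sub_le_of_abs_deriv_le_rpow {f : ℝ → ℝ} {K σ x y : ℝ} (hσ : σ ≠ 1) (hK : 0 ≤ K)
    (hx : 0 < x) (hxy : x ≤ y) (hf : ∀ τ ∈ Icc x y, DifferentiableAt ℝ f τ)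
    (hbound : ∀ τ ∈ Ioo x y, |deriv f τ| ≤ K * τ ^ (σ - 2)) :
    |f y - f x| ≤ K / |σ - 1| * (x ^ (σ - 1) + y ^ (σ - 1)) := by
  have hσ' : σ - 1 ≠ 0 := sub_ne_zero.2 hσ
  have hg : ∀ τ ∈ Icc x y, HasDerivAt (fun τ => K / (σ - 1) * τ ^ (σ - 1)) (K * τ ^ (σ - 2)) τ :=
    fun τ hτ => ((Real.hasDerivAt_rpow_const (Or.inl (hx.trans_le hτ.1).ne')).const_mul
      _).congr_deriv (by rw [sub_sub, one_add_one_eq_two]; field_simp)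
  have key := abs_sub_le_sub_of_abs_hasDerivAt_le hxy
    (fun τ hτ => (hf τ hτ).continuousAt.continuousWithinAt)
    (fun τ hτ => (hg τ hτ).continuousAt.continuousWithinAt)
    (fun τ hτ => (hf τ (Ioo_subset_Icc_self hτ)).hasDerivAt)
    (fun τ hτ => hg τ (Ioo_subset_Icc_self hτ)) hbound
  have hdiff : |y ^ (σ - 1) - x ^ (σ - 1)| ≤ x ^ (σ - 1) + y ^ (σ - 1) :=
    abs_sub_le_iff.2 ⟨by linarith [Real.rpow_nonneg hx.le (σ - 1)],
      by linarith [Real.rpow_nonneg (hx.le.trans hxy) (σ - 1)]⟩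
  calc |f y - f x| ≤ K / (σ - 1) * (y ^ (σ - 1) - x ^ (σ - 1)) := by rw [mul_sub]; exact key
    _ ≤ |K / (σ - 1) * (y ^ (σ - 1) - x ^ (σ - 1))| := le_abs_self _
    _ ≤ K / |σ - 1| * (x ^ (σ - 1) + y ^ (σ - 1)) := by
      rw [abs_mul, abs_div, abs_of_nonneg hK]; gcongr

section FirstOrderRemainder

variable {u : ℝ → ℝ} {σ c t s : ℝ}

theorem abs_sub_sub_deriv_mul_le (hσ : 0 < σ) (hu : ContinuousOn u (Icc 0 t))
    (hd : ∀ x ∈ Ioc 0 t, DifferentiableAt ℝ u x)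
    (hosc : ∀ x ∈ Ioc 0 t, ∀ y ∈ Ioc 0 t, x ≤ y →
      |deriv u y - deriv u x| ≤ c * (x ^ (σ - 1) + y ^ (σ - 1)))
    (hs : s ∈ Ioc 0 t) :
    |u s - u 0 - deriv u s * s| ≤ c * (1 + 1 / σ) * s ^ σ := by
  have hIcc : Icc 0 s ⊆ Icc 0 t := Icc_subset_Icc_right hs.2
  have hIoo : ∀ τ ∈ Ioo 0 s, τ ∈ Ioc 0 t := fun τ hτ => ⟨hτ.1, hτ.2.le.trans hs.2⟩
  have key := abs_sub_le_sub_of_abs_hasDerivAt_le (f := fun τ => u τ - deriv u s * τ)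
    (g := fun τ => c * (τ ^ σ / σ + s ^ (σ - 1) * τ))
    (f' := fun τ => deriv u τ - deriv u s) (g' := fun τ => c * (τ ^ (σ - 1) + s ^ (σ - 1)))
    hs.1.le ((hu.mono hIcc).sub (continuousOn_const.mul continuousOn_id))
    (((Real.continuous_rpow_const hσ.le).div_const σ |>.add
      (continuous_const.mul continuous_id)).const_mul c).continuousOn
    (fun τ hτ => ((hd τ (hIoo τ hτ)).hasDerivAt.sub ((hasDerivAt_id τ).const_mul _)).congr_deriv
      (by rw [mul_one]))
    (fun τ hτ => ((((Real.hasDerivAt_rpow_const (Or.inl hτ.1.ne')).div_const σ).add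
      ((hasDerivAt_id τ).const_mul _)).const_mul c).congr_deriv (by field_simp))
    (fun τ hτ => abs_sub_comm (deriv u τ) _ ▸ hosc τ (hIoo τ hτ) s hs hτ.2.le)
  have hs_pow : s ^ (σ - 1) * s = s ^ σ := by
    rw [Real.rpow_sub_one hs.1.ne', div_mul_cancel₀ _ hs.1.ne']
  simp only [Real.zero_rpow hσ.ne', mul_zero, sub_zero, zero_div, add_zero, hs_pow] at key
  calc |u s - u 0 - deriv u s * s| = |u s - deriv u s * s - u 0| := by ring_nf
    _ ≤ c * (s ^ σ / σ + s ^ σ) := key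
    _ = c * (1 + 1 / σ) * s ^ σ := by ring

theorem abs_sub_sub_deriv_mul_sub_le (hc : 0 ≤ c)
    (hd : ∀ x ∈ Ioc 0 t, DifferentiableAt ℝ u x)
    (hosc : ∀ x ∈ Ioc 0 t, ∀ y ∈ Ioc 0 t, x ≤ y →
      |deriv u y - deriv u x| ≤ c * (x ^ (σ - 1) + y ^ (σ - 1)))
    (hs : s ∈ Ioc 0 t) :
    |u t - u s - deriv u s * (t - s)| ≤ 2 * c * (s ^ (σ - 1) + t ^ (σ - 1)) * (t - s) := by
  have hIcc : ∀ τ ∈ Icc s t, τ ∈ Ioc 0 t := fun τ hτ => ⟨hs.1.trans_le hτ.1, hτ.2⟩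
  have hderiv : ∀ τ ∈ Icc s t,
      HasDerivAt (fun τ => u τ - deriv u s * τ) (deriv u τ - deriv u s) τ :=
    fun τ hτ => ((hd τ (hIcc τ hτ)).hasDerivAt.sub ((hasDerivAt_id τ).const_mul _)).congr_deriv
      (by rw [mul_one])
  have key := abs_sub_le_sub_of_abs_hasDerivAt_le (f := fun τ => u τ - deriv u s * τ)
    (g := fun τ => τ * (2 * c * (s ^ (σ - 1) + t ^ (σ - 1))))
    (g' := fun _ => 2 * c * (s ^ (σ - 1) + t ^ (σ - 1))) hs.2
    (fun τ hτ => (hderiv τ hτ).continuousAt.continuousWithinAt)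
    (continuous_id.mul continuous_const).continuousOn
    (fun τ hτ => hderiv τ (Ioo_subset_Icc_self hτ))
    (fun τ _ => hasDerivAt_mul_const _) fun τ hτ => by
      have hτ' := Ioo_subset_Icc_self hτ
      have hτpow := rpow_le_rpow_add_rpow_of_mem_Icc hs.1 hτ' (σ - 1)
      have ht_pow := Real.rpow_nonneg (hs.1.le.trans hs.2) (σ - 1)
      calc |deriv u τ - deriv u s| ≤ c * (s ^ (σ - 1) + τ ^ (σ - 1)) :=
            hosc s hs τ (hIcc τ hτ') hτ.1.le
        _ ≤ 2 * c * (s ^ (σ - 1) + t ^ (σ - 1)) := by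
          nlinarith [mul_le_mul_of_nonneg_left hτpow hc, mul_nonneg hc ht_pow]
  calc |u t - u s - deriv u s * (t - s)| = |u t - deriv u s * t - (u s - deriv u s * s)| := by
        ring_nf
    _ ≤ _ := key
    _ = _ := by ring

end FirstOrderRemainder

theorem abs_sub_lineMap_le (u : ℝ → ℝ) (m : ℝ) {s t : ℝ} (ht : 0 < t) (hs : 0 ≤ s)
    (hst : s ≤ t) :
    |u s - (u 0 + s / t * (u t - u 0))| ≤
      (t - s) / t * |u s - u 0 - m * s| + s / t * |u t - u s - m * (t - s)| := by
  have hE : u s - (u 0 + s / t * (u t - u 0)) =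
      (t - s) / t * (u s - u 0 - m * s) - s / t * (u t - u s - m * (t - s)) := by
    field_simp; ring
  rw [hE]
  refine (abs_sub _ _).trans_eq ?_
  rw [abs_mul, abs_mul, abs_of_nonneg (div_nonneg (sub_nonneg.2 hst) ht.le),
    abs_of_nonneg (div_nonneg hs ht.le)]

/-- interpolation error on the first mesh interval:
`|u(s) − u^I(s)| ≤ C′ (t₁ − s)(s^{σ−1} + t₁^{σ−1})` for `s ∈ (0, t₁)`, where
`u^I` is the affine interpolant of `u` at `0` and `t₁`. -/
theorem stmt9 (σ C : ℝ) (hσ : σ ∈ Set.Ioo (0:ℝ) 1 ∪ Set.Ioo (1:ℝ) 2) (hC : 0 < C) :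
    ∃ C' : ℝ, 0 < C' ∧
      ∀ t₁ : ℝ, 0 < t₁ → ∀ u : ℝ → ℝ,
        ContinuousOn u (Set.Icc 0 t₁) →
        (∀ s ∈ Set.Ioc (0:ℝ) t₁, DifferentiableAt ℝ u s) →
        (∀ s ∈ Set.Ioc (0:ℝ) t₁, DifferentiableAt ℝ (deriv u) s) →
        ContinuousOn (deriv (deriv u)) (Set.Ioc 0 t₁) →
        (∀ s ∈ Set.Ioc (0:ℝ) t₁, |deriv u s| ≤ C * (1 + s ^ (σ - 1))) →
        (∀ s ∈ Set.Ioc (0:ℝ) t₁, |deriv (deriv u) s| ≤ C * s ^ (σ - 2)) →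
        ∀ s ∈ Set.Ioo (0:ℝ) t₁,
          |u s - (u 0 + (s / t₁) * (u t₁ - u 0))| ≤
            C' * (t₁ - s) * (s ^ (σ - 1) + t₁ ^ (σ - 1)) := by
  have hσ0 : 0 < σ := by rcases hσ with h | h <;> linarith [h.1]
  have hσ1 : σ ≠ 1 := by rcases hσ with h | h <;> [exact h.2.ne; exact h.1.ne']
  set c := C / |σ - 1|
  have hc : 0 < c := div_pos hC (abs_pos.2 (sub_ne_zero.2 hσ1))
  refine ⟨c * (3 + 1 / σ), by positivity, ?_⟩
  intro t₁ ht₁ u hu hd hd' _ _ hb s hs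
  have hosc : ∀ x ∈ Ioc 0 t₁, ∀ y ∈ Ioc 0 t₁, x ≤ y →
      |deriv u y - deriv u x| ≤ c * (x ^ (σ - 1) + y ^ (σ - 1)) := fun x hx y hy hxy =>
    abs_sub_le_of_abs_deriv_le_rpow hσ1 hC.le hx.1 hxy
      (fun τ hτ => hd' τ ⟨hx.1.trans_le hτ.1, hτ.2.trans hy.2⟩)
      (fun τ hτ => hb τ ⟨hx.1.trans hτ.1, hτ.2.le.trans hy.2⟩)
  have hs' : s ∈ Ioc 0 t₁ := Ioo_subset_Ioc_self hs
  have hleft := abs_sub_sub_deriv_mul_le hσ0 hu hd hosc hs'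
  have hright := abs_sub_sub_deriv_mul_sub_le hc.le hd hosc hs'
  have hpow : s ^ σ / t₁ ≤ s ^ (σ - 1) := by
    rw [Real.rpow_sub_one hs.1.ne']
    exact div_le_div_of_nonneg_left (Real.rpow_nonneg hs.1.le σ) hs.1 hs.2.le
  have hS : s ^ (σ - 1) ≤ s ^ (σ - 1) + t₁ ^ (σ - 1) :=
    le_add_of_nonneg_right (Real.rpow_nonneg ht₁.le _)
  have hts : 0 ≤ t₁ - s := sub_nonneg.2 hs.2.le
  calc _ ≤ (t₁ - s) / t₁ * |u s - u 0 - deriv u s * s|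
        + s / t₁ * |u t₁ - u s - deriv u s * (t₁ - s)| :=
        abs_sub_lineMap_le u (deriv u s) ht₁ hs.1.le hs.2.le
    _ ≤ (t₁ - s) / t₁ * (c * (1 + 1 / σ) * s ^ σ)
        + 1 * (2 * c * (s ^ (σ - 1) + t₁ ^ (σ - 1)) * (t₁ - s)) := by
      gcongr
      exact (div_le_one ht₁).2 hs.2.le
    _ = (t₁ - s) * (c * (1 + 1 / σ)) * (s ^ σ / t₁)
        + 2 * c * (s ^ (σ - 1) + t₁ ^ (σ - 1)) * (t₁ - s) := by ring
    _ ≤ (t₁ - s) * (c * (1 + 1 / σ)) * (s ^ (σ - 1) + t₁ ^ (σ - 1))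
        + 2 * c * (s ^ (σ - 1) + t₁ ^ (σ - 1)) * (t₁ - s) := by
      gcongr; exact hpow.trans hS
    _ = _ := by ring
end

section
/- Let α ∈ (0,1) and σ > 0. There exists a constant C > 0, depending only on α and σ, such that for all 0 < t₁ ≤ t_m: ∫_0^{t₁} (t_m − s)^{−α−1} (t₁ − s)(s^{σ−1} + t₁^{σ−1}) ds ≤ C · t₁^{σ−α} · (t₁/t_m)^{α+1}. -/
/-!
Since `(t₁ - s) / (t_m - s) ≤ t₁ / t_m` for `0 ≤ s ≤ t₁ ≤ t_m`, the kernel satisfies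
`(t_m - s)^(-α-1) (t₁ - s) ≤ (t₁ / t_m)^(α+1) (t₁ - s)^(-α)`. The remaining integral
`∫₀^{t₁} (t₁ - s)^(-α) (s^(σ-1) + t₁^(σ-1)) ds` is homogeneous of degree `σ - α` in `t₁`,
so it equals `t₁^(σ-α) C` with `C = ∫₀¹ (1 - u)^(-α) (u^(σ-1) + 1) du = B(σ, 1 - α) + 1 / (1 - α)`.
-/

open MeasureTheory Set

namespace intervalIntegral

theorem integral_mono_on_of_nonneg {f g : ℝ → ℝ} {a b : ℝ} (hab : a ≤ b)
    (hg : IntervalIntegrable g volume a b) (hf : ∀ x ∈ Ioc a b, 0 ≤ f x)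
    (hfg : ∀ x ∈ Ioc a b, f x ≤ g x) : ∫ x in a..b, f x ≤ ∫ x in a..b, g x := by
  rw [integral_of_le hab, integral_of_le hab]
  exact integral_mono_of_nonneg (ae_restrict_of_forall_mem measurableSet_Ioc hf)
    ((intervalIntegrable_iff_integrableOn_Ioc_of_le hab).mp hg)
    (ae_restrict_of_forall_mem measurableSet_Ioc hfg)

end intervalIntegral

namespace Real

theorem rpow_neg_sub_one_mul_sub_le {a s t T : ℝ} (ha : -1 ≤ a) (hs : 0 ≤ s) (hst : s ≤ t)
    (htT : t ≤ T) : (T - s) ^ (-a - 1) * (t - s) ≤ (t / T) ^ (a + 1) * (t - s) ^ (-a) := by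
  rcases hst.eq_or_lt with rfl | hst
  · rw [sub_self, mul_zero]
    exact mul_nonneg (rpow_nonneg (div_nonneg hs (hs.trans htT)) _) (rpow_nonneg le_rfl _)
  have hts : 0 < t - s := sub_pos.mpr hst
  have hTs : 0 < T - s := by linarith
  have hratio : (t - s) / (T - s) ≤ t / T := by
    rw [div_le_div_iff₀ hTs (by linarith)]
    nlinarith
  calc (T - s) ^ (-a - 1) * (t - s)
      = ((t - s) / (T - s)) ^ (a + 1) * (t - s) ^ (-a) := by
        rw [div_rpow hts.le hTs.le, show -a - 1 = -(a + 1) by ring, rpow_neg hTs.le,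
          div_mul_eq_mul_div, ← rpow_add hts, show a + 1 + -a = 1 by ring, rpow_one]
        ring
    _ ≤ (t / T) ^ (a + 1) * (t - s) ^ (-a) := by
        gcongr
        linarith

end Real

theorem intervalIntegrable_sub_rpow {b : ℝ} (hb : -1 < b) (t : ℝ) :
    IntervalIntegrable (fun s => (t - s) ^ b) volume 0 t := by
  simpa using
    ((intervalIntegral.intervalIntegrable_rpow' hb (a := 0) (b := t)).comp_sub_left t).symm

theorem intervalIntegrable_sub_rpow_mul_rpow {a b t : ℝ} (ha : -1 < a) (hb : -1 < b)
    (ht : 0 < t) : IntervalIntegrable (fun s => (t - s) ^ a * s ^ b) volume 0 t := by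
  have hleft : IntervalIntegrable (fun s => (t - s) ^ a * s ^ b) volume 0 (t / 2) := by
    refine (intervalIntegral.intervalIntegrable_rpow' hb).continuousOn_mul ?_
    refine (continuousOn_const.sub continuousOn_id).rpow_const fun s hs => Or.inl ?_
    rw [uIcc_of_le (by linarith)] at hs
    exact (sub_pos.mpr (by linarith [hs.2] : s < t)).ne'
  have hright : IntervalIntegrable (fun s => (t - s) ^ a * s ^ b) volume (t / 2) t := by
    refine ((intervalIntegrable_sub_rpow ha t).mono_set ?_).mul_continuousOn ?_
    · rw [uIcc_of_le (by linarith), uIcc_of_le ht.le]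
      exact Icc_subset_Icc_left (by linarith)
    · refine continuousOn_id.rpow_const fun s hs => Or.inl ?_
      rw [uIcc_of_le (by linarith)] at hs
      exact (by linarith [hs.1] : (0:ℝ) < s).ne'
  exact hleft.trans hright

theorem intervalIntegrable_sub_rpow_mul_add_rpow {a b t : ℝ} (ha : -1 < a) (hb : -1 < b)
    (ht : 0 < t) : IntervalIntegrable (fun s => (t - s) ^ a * (s ^ b + t ^ b)) volume 0 t := by
  simpa only [mul_add] using
    (intervalIntegrable_sub_rpow_mul_rpow ha hb ht).add
      ((intervalIntegrable_sub_rpow ha t).mul_const _)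

theorem integral_sub_rpow_mul_add_rpow_pos {a b : ℝ} (ha : -1 < a) (hb : -1 < b) :
    0 < ∫ u in (0:ℝ)..1, (1 - u) ^ a * (u ^ b + 1) := by
  refine intervalIntegral.intervalIntegral_pos_of_pos_on ?_ (fun u hu => ?_) one_pos
  · simpa only [Real.one_rpow] using intervalIntegrable_sub_rpow_mul_add_rpow ha hb one_pos
  · exact mul_pos (Real.rpow_pos_of_pos (sub_pos.mpr hu.2) _)
      (add_pos_of_nonneg_of_pos (Real.rpow_nonneg hu.1.le _) one_pos)

theorem integral_sub_rpow_mul_add_rpow_eq {a b t : ℝ} (ht : 0 < t) :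
    ∫ s in (0:ℝ)..t, (t - s) ^ a * (s ^ b + t ^ b)
      = t ^ (a + b + 1) * ∫ u in (0:ℝ)..1, (1 - u) ^ a * (u ^ b + 1) := by
  have hscale : EqOn (fun u => (t - t * u) ^ a * ((t * u) ^ b + t ^ b))
      (fun u => t ^ (a + b) * ((1 - u) ^ a * (u ^ b + 1))) (uIcc 0 1) := by
    intro u hu
    rw [uIcc_of_le zero_le_one] at hu
    simp only
    rw [show t - t * u = t * (1 - u) by ring, Real.mul_rpow ht.le (by linarith [hu.2]),
      Real.mul_rpow ht.le hu.1, Real.rpow_add ht]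
    ring
  have hsub := intervalIntegral.integral_comp_mul_left
    (fun s => (t - s) ^ a * (s ^ b + t ^ b)) (a := 0) (b := 1) ht.ne'
  rw [intervalIntegral.integral_congr hscale, intervalIntegral.integral_const_mul,
    mul_zero, mul_one, smul_eq_mul] at hsub
  rw [Real.rpow_add ht, Real.rpow_one, mul_assoc, mul_left_comm, hsub]
  field_simp

/-- the weighted-integral bound
`∫_0^{t₁}(t_m − s)^{−α−1}(t₁ − s)(s^{σ−1} + t₁^{σ−1}) ds ≤ C t₁^{σ−α}(t₁/t_m)^{α+1}`
for `0 < t₁ ≤ t_m`. -/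
theorem stmt11 (α σ : ℝ) (hα : α ∈ Set.Ioo (0:ℝ) 1) (hσ : 0 < σ) :
    ∃ C : ℝ, 0 < C ∧
      ∀ t₁ tm : ℝ, 0 < t₁ → t₁ ≤ tm →
        (∫ s in (0:ℝ)..t₁,
            (tm - s) ^ (-α - 1) * ((t₁ - s) * (s ^ (σ - 1) + t₁ ^ (σ - 1))))
          ≤ C * t₁ ^ (σ - α) * (t₁ / tm) ^ (α + 1) := by
  obtain ⟨hα0, hα1⟩ := hα
  have ha : -1 < -α := by linarith
  have hb : -1 < σ - 1 := by linarith
  refine ⟨_, integral_sub_rpow_mul_add_rpow_pos ha hb, fun t₁ tm ht₁ htm => ?_⟩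
  have hsum : ∀ s ∈ Ioc 0 t₁, 0 ≤ s ^ (σ - 1) + t₁ ^ (σ - 1) := fun s hs =>
    add_nonneg (Real.rpow_nonneg hs.1.le _) (Real.rpow_nonneg ht₁.le _)
  calc _ ≤ ∫ s in (0:ℝ)..t₁,
          (t₁ / tm) ^ (α + 1) * ((t₁ - s) ^ (-α) * (s ^ (σ - 1) + t₁ ^ (σ - 1))) := by
        refine intervalIntegral.integral_mono_on_of_nonneg ht₁.le
          ((intervalIntegrable_sub_rpow_mul_add_rpow ha hb ht₁).const_mul _)
          (fun s hs => mul_nonneg (Real.rpow_nonneg (by linarith [hs.2]) _)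
            (mul_nonneg (sub_nonneg.mpr hs.2) (hsum s hs))) (fun s hs => ?_)
        rw [← mul_assoc, ← mul_assoc]
        exact mul_le_mul_of_nonneg_right
          (Real.rpow_neg_sub_one_mul_sub_le (by linarith) hs.1.le hs.2 htm) (hsum s hs)
    _ = _ := by
        rw [intervalIntegral.integral_const_mul, integral_sub_rpow_mul_add_rpow_eq ht₁,
          show -α + (σ - 1) + 1 = σ - α by ring]
        ring
end

section
/- (Truncation error of the semilinear discretization.) Let σ ∈ (0,1) ∪ (1,2), let the mesh be quasi-graded with parameter r ≥ 1 and constants c₁, c₂, and let u : [0,T] → ℝ be continuous, continuously differentiable on (0,T], with |u′(t)| ≤ C_u(1 + t^{σ−1}) for t ∈ (0,T]. Let f : ℝ → ℝ and F : ℝ² → ℝ satisfy |F(v,w) − f(v)| ≤ L|v − w|^q for all v, w in the range of u, for fixed L > 0 and q ≥ 1. Set σ̂ := min{σ, 1}. Then there exists C > 0, depending only on L, q, σ, r, T, C_u, c₁, c₂, such that for all 1 ≤ m ≤ M: |F(u(t_m), u(t_{m−1})) − f(u(t_m))| ≤ C · (t_m^{σ̂} (τ/t_m)^{1/r})^q.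 -/
/-! On `[a, b] ⊆ [0, T]` the increment of `u` is bounded by that of an antiderivative of
`C_u (1 + s^(σ-1))`, i.e. by `C_u ((b - a) + (b^σ - a^σ) / σ)`, and concavity of `s ↦ s^σ`
(for `σ ≤ 1`) or convexity (for `σ ≥ 1`) bounds this by a constant times `b^(σ̂-1) (b - a)`.
On a quasi-graded mesh `t_m - t_{m-1} ≤ c₂ (τ / t_m)^(1/r) t_m`, so
`|u(t_m) - u(t_{m-1})| ≲ t_m^σ̂ (τ / t_m)^(1/r)`, and the bound `L |v - w|^q` on `F - f`
raises this to the power `q`. -/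

open Set

theorem abs_sub_le_sub_of_abs_deriv_le {D : Set ℝ} (hD : Convex ℝ D) {g φ : ℝ → ℝ}
    (hg : ContinuousOn g D) (hφ : ContinuousOn φ D)
    (hgd : DifferentiableOn ℝ g (interior D)) (hφd : DifferentiableOn ℝ φ (interior D))
    (hle : ∀ x ∈ interior D, |deriv g x| ≤ deriv φ x)
    {a b : ℝ} (ha : a ∈ D) (hb : b ∈ D) (hab : a ≤ b) : |g b - g a| ≤ φ b - φ a := by
  have hdiff : ∀ x ∈ interior D, DifferentiableAt ℝ g x ∧ DifferentiableAt ℝ φ x := fun x hx =>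
    ⟨hgd.differentiableAt (isOpen_interior.mem_nhds hx),
      hφd.differentiableAt (isOpen_interior.mem_nhds hx)⟩
  have hsub : MonotoneOn (fun x => φ x - g x) D :=
    monotoneOn_of_deriv_nonneg hD (hφ.sub hg) (hφd.sub hgd) fun x hx => by
      obtain ⟨hgx, hφx⟩ := hdiff x hx
      rw [deriv_fun_sub hφx hgx]
      linarith [le_abs_self (deriv g x), hle x hx]
  have hadd : MonotoneOn (fun x => φ x + g x) D :=
    monotoneOn_of_deriv_nonneg hD (hφ.add hg) (hφd.add hgd) fun x hx => by
      obtain ⟨hgx, hφx⟩ := hdiff x hx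
      rw [deriv_fun_add hφx hgx]
      linarith [neg_abs_le (deriv g x), hle x hx]
  have h₁ := hsub ha hb hab
  have h₂ := hadd ha hb hab
  simp only at h₁ h₂
  rw [abs_sub_le_iff]
  constructor <;> linarith

theorem abs_sub_le_of_abs_deriv_le_one_add_rpow {σ C T : ℝ} (hσ : 0 < σ) {u : ℝ → ℝ}
    (hu : ContinuousOn u (Icc 0 T)) (hud : ∀ s ∈ Ioc (0 : ℝ) T, DifferentiableAt ℝ u s)
    (hub : ∀ s ∈ Ioc (0 : ℝ) T, |deriv u s| ≤ C * (1 + s ^ (σ - 1)))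
    {a b : ℝ} (ha : 0 ≤ a) (hab : a ≤ b) (hbT : b ≤ T) :
    |u b - u a| ≤ C * ((b - a) + (b ^ σ - a ^ σ) / σ) := by
  set φ : ℝ → ℝ := fun x => C * (x + x ^ σ / σ)
  have hφ' : ∀ x : ℝ, 0 < x → HasDerivAt φ (C * (1 + x ^ (σ - 1))) x := fun x hx => by
    have h := ((hasDerivAt_id x).add
      ((Real.hasDerivAt_rpow_const (p := σ) (Or.inl hx.ne')).div_const σ)).const_mul C
    rwa [mul_div_cancel_left₀ _ hσ.ne'] at h
  have hint : interior (Icc 0 T) = Ioo 0 T := interior_Icc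
  have key := abs_sub_le_sub_of_abs_deriv_le (convex_Icc 0 T) hu
    (φ := φ) (Continuous.continuousOn (by fun_prop (disch := exact hσ.le)))
    (fun x hx => by rw [hint] at hx; exact (hud x (Ioo_subset_Ioc_self hx)).differentiableWithinAt)
    (fun x hx => by rw [hint] at hx; exact (hφ' x hx.1).differentiableAt.differentiableWithinAt)
    (fun x hx => by
      rw [hint] at hx
      rw [(hφ' x hx.1).deriv]
      exact hub x (Ioo_subset_Ioc_self hx))
    ⟨ha, hab.trans hbT⟩ ⟨ha.trans hab, hbT⟩ hab
  convert key using 1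
  simp only [φ]
  ring

theorem Real.rpow_sub_rpow_le_of_le_one {σ a b : ℝ} (hσ : σ ≤ 1) (ha : 0 ≤ a) (hab : a ≤ b) :
    b ^ σ - a ^ σ ≤ b ^ (σ - 1) * (b - a) := by
  rcases hab.eq_or_lt with rfl | hab
  · simp
  have hb : 0 < b := ha.trans_lt hab
  have ha' : a * b ^ (σ - 1) ≤ a ^ σ := by
    rcases ha.eq_or_lt with rfl | ha
    · simpa using Real.rpow_nonneg le_rfl σ
    calc a * b ^ (σ - 1) ≤ a * a ^ (σ - 1) :=
          mul_le_mul_of_nonneg_left (Real.rpow_le_rpow_of_nonpos ha hab.le (by linarith)) ha.le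
      _ = a ^ σ := by rw [Real.rpow_sub_one ha.ne']; field_simp
  have hb' : b ^ σ = b ^ (σ - 1) * b := by rw [Real.rpow_sub_one hb.ne']; field_simp
  linarith

theorem Real.rpow_sub_rpow_le_of_one_le {σ a b : ℝ} (hσ : 1 ≤ σ) (ha : 0 ≤ a) (hab : a ≤ b) :
    b ^ σ - a ^ σ ≤ σ * b ^ (σ - 1) * (b - a) := by
  rcases hab.eq_or_lt with rfl | hab
  · simp
  have hb : 0 < b := ha.trans_lt hab
  -- Bernoulli's inequality at `s = a / b - 1`
  have h := one_add_mul_self_le_rpow_one_add (s := a / b - 1)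
    (by linarith [div_nonneg ha hb.le]) hσ
  rw [add_sub_cancel, Real.div_rpow ha hb.le, le_div_iff₀ (by positivity)] at h
  rw [Real.rpow_sub_one hb.ne']
  have : (1 + σ * (a / b - 1)) * b ^ σ = b ^ σ - σ * (b ^ σ / b) * (b - a) := by
    field_simp; ring
  linarith

theorem exists_sub_add_rpow_sub_rpow_div_le {σ T : ℝ} (hσ : 0 < σ) (hT : 0 < T) :
    ∃ K > 0, ∀ a b, 0 ≤ a → a ≤ b → b ≤ T →
      (b - a) + (b ^ σ - a ^ σ) / σ ≤ K * b ^ (min σ 1 - 1) * (b - a) := by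
  rcases le_total σ 1 with hσ1 | hσ1
  · refine ⟨T ^ (1 - σ) + 1 / σ, by positivity, fun a b ha hab hbT => ?_⟩
    rw [min_eq_left hσ1]
    rcases hab.eq_or_lt with rfl | hab'
    · simp
    have hb : 0 < b := ha.trans_lt hab'
    have hTb : 1 ≤ T ^ (1 - σ) * b ^ (σ - 1) := by
      rw [← neg_sub 1 σ, Real.rpow_neg hb.le, ← div_eq_mul_inv, one_le_div (by positivity)]
      exact Real.rpow_le_rpow hb.le hbT (by linarith)
    have hσab := Real.rpow_sub_rpow_le_of_le_one hσ1 ha hab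
    have hba : 0 ≤ b - a := by linarith
    calc (b - a) + (b ^ σ - a ^ σ) / σ
        ≤ T ^ (1 - σ) * b ^ (σ - 1) * (b - a) + b ^ (σ - 1) * (b - a) / σ := by
          gcongr
          nlinarith
      _ = (T ^ (1 - σ) + 1 / σ) * b ^ (σ - 1) * (b - a) := by ring
  · refine ⟨1 + T ^ (σ - 1), by positivity, fun a b ha hab hbT => ?_⟩
    rw [min_eq_right hσ1, sub_self, Real.rpow_zero, mul_one]
    have hσab := Real.rpow_sub_rpow_le_of_one_le hσ1 ha hab
    have hbT' : b ^ (σ - 1) ≤ T ^ (σ - 1) :=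
      Real.rpow_le_rpow (ha.trans hab) hbT (by linarith)
    have hba : 0 ≤ b - a := by linarith
    calc (b - a) + (b ^ σ - a ^ σ) / σ ≤ (b - a) + b ^ (σ - 1) * (b - a) := by
          gcongr
          rw [div_le_iff₀ hσ]
          linarith
      _ ≤ (1 + T ^ (σ - 1)) * (b - a) := by nlinarith

theorem monotoneOn_Iic_of_sub_one_lt {M : ℕ} {t : ℕ → ℝ}
    (hstep : ∀ j, 1 ≤ j → j ≤ M → t (j - 1) < t j) : MonotoneOn t (Iic M) :=
  monotoneOn_of_le_succ ordConnected_Iic fun n _ _ hn => by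
    rw [Order.succ_eq_add_one] at hn ⊢
    simpa using (hstep (n + 1) (by omega) hn).le

theorem Real.rpow_mul_rpow_one_sub {x y p : ℝ} (hx : 0 ≤ x) (hy : 0 < y) :
    x ^ p * y ^ (1 - p) = (x / y) ^ p * y := by
  rw [Real.div_rpow hx hy.le, Real.rpow_sub hy, Real.rpow_one]
  field_simp

theorem stmt13_general (σ r c₁ c₂ C_u L q T : ℝ)
    (hσ : σ ∈ Set.Ioo (0:ℝ) 1 ∪ Set.Ioo (1:ℝ) 2)
    (hc₂ : 0 < c₂) (hCu : 0 < C_u) (hL : 0 < L) (hq : 1 ≤ q)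
    (hT : 0 < T) :
    ∃ C : ℝ, 0 < C ∧
      ∀ (M : ℕ) (t : ℕ → ℝ), t 0 = 0 → t M = T →
        (∀ j, 1 ≤ j → j ≤ M → t (j - 1) < t j) →
        c₁ * (M : ℝ) ^ (-r) ≤ t 1 → t 1 ≤ c₂ * (M : ℝ) ^ (-r) →
        (∀ j, 1 ≤ j → j ≤ M →
          t j - t (j - 1) ≤ c₂ * (t 1) ^ (1 / r) * (t j) ^ (1 - 1 / r)) →
        ∀ u : ℝ → ℝ,
          ContinuousOn u (Set.Icc 0 T) →
          (∀ s ∈ Set.Ioc (0:ℝ) T, DifferentiableAt ℝ u s) →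
          (∀ s ∈ Set.Ioc (0:ℝ) T, |deriv u s| ≤ C_u * (1 + s ^ (σ - 1))) →
          ∀ f : ℝ → ℝ, ∀ F : ℝ → ℝ → ℝ,
            (∀ v w : ℝ, v ∈ u '' Set.Icc 0 T → w ∈ u '' Set.Icc 0 T →
              |F v w - f v| ≤ L * |v - w| ^ q) →
            ∀ m, 1 ≤ m → m ≤ M →
              |F (u (t m)) (u (t (m - 1))) - f (u (t m))| ≤
                C * ((t m) ^ (min σ 1) * (t 1 / t m) ^ (1 / r)) ^ q := by
  have hσ0 : 0 < σ := by rcases hσ with h | h <;> linarith [h.1]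
  obtain ⟨K, hK, hKinc⟩ := exists_sub_add_rpow_sub_rpow_div_le hσ0 hT
  refine ⟨L * (C_u * K * c₂) ^ q, by positivity, ?_⟩
  intro M t ht0 htM hstep _ _ hgrade u hu hud hub f F hF m hm1 hmM
  have hmono := monotoneOn_Iic_of_sub_one_lt hstep
  have ht1 : 0 < t 1 := by simpa [ht0] using hstep 1 le_rfl (hm1.trans hmM)
  have htm : 0 < t m := ht1.trans_le (hmono (mem_Iic.2 (hm1.trans hmM)) hmM hm1)
  have htmT : t m ≤ T := htM ▸ hmono hmM (mem_Iic.2 le_rfl) hmM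
  have ht0m : 0 ≤ t (m - 1) :=
    ht0 ▸ hmono (mem_Iic.2 (Nat.zero_le M)) (mem_Iic.2 (by omega)) (Nat.zero_le _)
  have hstepm := (hstep m hm1 hmM).le
  have hτ : t m - t (m - 1) ≤ c₂ * ((t 1 / t m) ^ (1 / r) * t m) := by
    rw [← Real.rpow_mul_rpow_one_sub ht1.le htm, ← mul_assoc]
    exact hgrade m hm1 hmM
  have hΔ : |u (t m) - u (t (m - 1))| ≤
      C_u * K * c₂ * ((t m) ^ (min σ 1) * (t 1 / t m) ^ (1 / r)) :=
    calc |u (t m) - u (t (m - 1))|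
        ≤ C_u * ((t m - t (m - 1)) + ((t m) ^ σ - (t (m - 1)) ^ σ) / σ) :=
          abs_sub_le_of_abs_deriv_le_one_add_rpow hσ0 hu hud hub ht0m hstepm htmT
      _ ≤ C_u * (K * (t m) ^ (min σ 1 - 1) * (c₂ * ((t 1 / t m) ^ (1 / r) * t m))) := by
          gcongr
          exact (hKinc _ _ ht0m hstepm htmT).trans (by gcongr)
      _ = C_u * K * c₂ * ((t m) ^ (min σ 1) * (t 1 / t m) ^ (1 / r)) := by
          rw [Real.rpow_sub_one htm.ne']
          field_simp
  calc |F (u (t m)) (u (t (m - 1))) - f (u (t m))|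
      ≤ L * |u (t m) - u (t (m - 1))| ^ q :=
        hF _ _ ⟨_, ⟨htm.le, htmT⟩, rfl⟩ ⟨_, ⟨ht0m, hstepm.trans htmT⟩, rfl⟩
    _ ≤ L * (C_u * K * c₂ * ((t m) ^ (min σ 1) * (t 1 / t m) ^ (1 / r))) ^ q := by gcongr
    _ = L * (C_u * K * c₂) ^ q * ((t m) ^ (min σ 1) * (t 1 / t m) ^ (1 / r)) ^ q := by
        rw [Real.mul_rpow (by positivity) (by positivity)]
        ring

/-- truncation error of the semilinear discretization:
if `|F(v,w) − f(v)| ≤ L|v−w|^q` on the range of `u`, then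
`|F(u(t_m), u(t_{m−1})) − f(u(t_m))| ≤ C (t_m^{σ̂}(τ/t_m)^{1/r})^q`
with `σ̂ = min{σ,1}`. -/
theorem stmt13 (σ r c₁ c₂ C_u L q T : ℝ)
    (hσ : σ ∈ Set.Ioo (0:ℝ) 1 ∪ Set.Ioo (1:ℝ) 2) (hr : 1 ≤ r)
    (hc₁ : 0 < c₁) (hc₂ : 0 < c₂) (hCu : 0 < C_u) (hL : 0 < L) (hq : 1 ≤ q)
    (hT : 0 < T) :
    ∃ C : ℝ, 0 < C ∧
      ∀ (M : ℕ) (t : ℕ → ℝ), t 0 = 0 → t M = T →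
        (∀ j, 1 ≤ j → j ≤ M → t (j - 1) < t j) →
        c₁ * (M : ℝ) ^ (-r) ≤ t 1 → t 1 ≤ c₂ * (M : ℝ) ^ (-r) →
        (∀ j, 1 ≤ j → j ≤ M →
          t j - t (j - 1) ≤ c₂ * (t 1) ^ (1 / r) * (t j) ^ (1 - 1 / r)) →
        ∀ u : ℝ → ℝ,
          ContinuousOn u (Set.Icc 0 T) →
          (∀ s ∈ Set.Ioc (0:ℝ) T, DifferentiableAt ℝ u s) →
          (∀ s ∈ Set.Ioc (0:ℝ) T, |deriv u s| ≤ C_u * (1 + s ^ (σ - 1))) →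
          ∀ f : ℝ → ℝ, ∀ F : ℝ → ℝ → ℝ,
            (∀ v w : ℝ, v ∈ u '' Set.Icc 0 T → w ∈ u '' Set.Icc 0 T →
              |F v w - f v| ≤ L * |v - w| ^ q) →
            ∀ m, 1 ≤ m → m ≤ M →
              |F (u (t m)) (u (t (m - 1))) - f (u (t m))| ≤
                C * ((t m) ^ (min σ 1) * (t 1 / t m) ^ (1 / r)) ^ q :=
  stmt13_general σ r c₁ c₂ C_u L q T hσ hc₂ hCu hL hq hT
end

section
/- (Discrete error inequality.) Let α ∈ (0,1), λ0, λ1 ≥ 0, and fix any mesh 0 = t_0 < t_1 < ⋯ < t_M = T. Let F : ℝ² → ℝ be such that for each fixed w ∈ ℝ the map v ↦ F(v, w) + λ0 v is nondecreasing, and |F(v, w + ω) − F(v, w)| ≤ λ1|ω| for all v, w, ω ∈ ℝ. Suppose the sequences (u^m), (e^m), (ρ^m) satisfy e^0 = 0 and δ^α e^m + F(u^m + e^m, u^{m−1} + e^{m−1}) − F(u^m, u^{m−1}) = ρ^m for all 1 ≤ m ≤ M. Then for all 1 ≤ m ≤ M: δ^α |e|^m − λ0|e^m| − λ1|e^{m−1}|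 ≤ |ρ^m|, where (|e|^j) denotes the sequence of absolute values (|e^j|). -/
/-!
Multiply the error equation at step `m` by `σ = sign e^m`. Because the kernel `s ↦ (t_m - s)^{-α}`
increases on `(-∞, t_m)`, the L1 weights `a_j = τ_j⁻¹ ∫_{t_{j-1}}^{t_j} (t_m - s)^{-α} ds` increase
with `j`. For `b = |e| - σ e`, which is nonnegative and vanishes at `0` and at `m`, summation by parts
then gives `δ^α b^m ≤ 0`, that is `δ^α |e|^m ≤ σ δ^α e^m`. The two conditions on `F` bound `σ` times
the nonlinear terms from below by `-λ₀|e^m| - λ₁|e^{m-1}|`.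
-/

open MeasureTheory Finset

section Kernel

variable {α c p q r : ℝ}

lemma intervalIntegrable_sub_rpow_neg (hα : α < 1) (c p q : ℝ) :
    IntervalIntegrable (fun s => (c - s) ^ (-α)) volume p q := by
  simpa using (intervalIntegral.intervalIntegrable_rpow' (a := c - p) (b := c - q)
    (by linarith : (-1 : ℝ) < -α)).comp_sub_left c

lemma integral_sub_rpow_neg_le (hα0 : 0 ≤ α) (hα1 : α < 1) (hpq : p ≤ q) (hqc : q < c) :
    ∫ s in p..q, (c - s) ^ (-α) ≤ (q - p) * (c - q) ^ (-α) := by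
  have h := intervalIntegral.integral_mono_on hpq (intervalIntegrable_sub_rpow_neg hα1 c p q)
    intervalIntegrable_const fun s hs =>
      Real.rpow_le_rpow_of_nonpos (sub_pos.2 hqc) (by linarith [hs.2]) (by linarith)
  rwa [intervalIntegral.integral_const, smul_eq_mul] at h

lemma le_integral_sub_rpow_neg (hα0 : 0 ≤ α) (hα1 : α < 1) (hpq : p ≤ q) (hqc : q ≤ c) :
    (q - p) * (c - p) ^ (-α) ≤ ∫ s in p..q, (c - s) ^ (-α) := by
  have h := intervalIntegral.integral_mono_on_of_le_Ioo hpq intervalIntegrable_const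
    (intervalIntegrable_sub_rpow_neg hα1 c p q) fun s hs =>
      Real.rpow_le_rpow_of_nonpos (by linarith [hs.2] : 0 < c - s) (by linarith [hs.1] : c - s ≤ c - p) (by linarith)
  rwa [intervalIntegral.integral_const, smul_eq_mul] at h

lemma average_sub_rpow_neg_le (hα0 : 0 ≤ α) (hα1 : α < 1) (hpq : p < q) (hqr : q < r)
    (hrc : r ≤ c) :
    (∫ s in p..q, (c - s) ^ (-α)) / (q - p) ≤ (∫ s in q..r, (c - s) ^ (-α)) / (r - q) :=
  calc (∫ s in p..q, (c - s) ^ (-α)) / (q - p)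
      ≤ (c - q) ^ (-α) := by
        rw [div_le_iff₀ (sub_pos.2 hpq), mul_comm]
        exact integral_sub_rpow_neg_le hα0 hα1 hpq.le (hqr.trans_le hrc)
    _ ≤ (∫ s in q..r, (c - s) ^ (-α)) / (r - q) := by
        rw [le_div_iff₀ (sub_pos.2 hqr), mul_comm]
        exact le_integral_sub_rpow_neg hα0 hα1 hqr.le hrc

end Kernel

lemma sum_Icc_sub_mul_le (a b : ℕ → ℝ) (hb : ∀ j, 0 ≤ b j) (hb0 : b 0 = 0) :
    ∀ n, (∀ j, 1 ≤ j → j < n → a j ≤ a (j + 1)) →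
      ∑ j ∈ Icc 1 n, (b j - b (j - 1)) * a j ≤ a n * b n
  | 0, _ => by simp [hb0]
  | n + 1, ha => by
    have ih := sum_Icc_sub_mul_le a b hb hb0 n fun j hj hjn => ha j hj (by omega)
    have hn : a n * b n ≤ a (n + 1) * b n := by
      rcases Nat.eq_zero_or_pos n with rfl | hn
      · simp [hb0]
      · exact mul_le_mul_of_nonneg_right (ha n hn (by omega)) (hb n)
    rw [sum_Icc_succ_top (by omega), Nat.add_sub_cancel]
    linarith

lemma mesh_le {t : ℕ → ℝ} {m : ℕ} (ht : ∀ j, 1 ≤ j → j ≤ m → t (j - 1) < t j)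
    {i j : ℕ} (hij : i ≤ j) (hjm : j ≤ m) : t i ≤ t j := by
  induction j, hij using Nat.le_induction with
  | base => exact le_rfl
  | succ j _ ih => simpa using (ih (by omega)).trans (ht (j + 1) (by omega) hjm).le

lemma l1_eq_sum_mul_average (α : ℝ) (t V : ℕ → ℝ) (m : ℕ) :
    l1 α t V m = (1 / Real.Gamma (1 - α)) * ∑ j ∈ Icc 1 m, (V j - V (j - 1)) *
      ((∫ s in (t (j - 1))..(t j), (t m - s) ^ (-α)) / (t j - t (j - 1))) := by
  simp only [l1, div_mul_eq_mul_div, mul_div_assoc]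

lemma l1_sub_const_mul (α : ℝ) (t V W : ℕ → ℝ) (c : ℝ) (m : ℕ) :
    l1 α t (fun j => V j - c * W j) m = l1 α t V m - c * l1 α t W m := by
  simp only [l1, mul_sum, ← sum_sub_distrib]
  refine sum_congr rfl fun j _ => ?_
  ring

lemma l1_nonpos {α : ℝ} (hα0 : 0 ≤ α) (hα1 : α < 1) {t b : ℕ → ℝ} {m : ℕ}
    (ht : ∀ j, 1 ≤ j → j ≤ m → t (j - 1) < t j)
    (hb : ∀ j, 0 ≤ b j) (hb0 : b 0 = 0) (hbm : b m = 0) : l1 α t b m ≤ 0 := by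
  have hΓ : 0 ≤ 1 / Real.Gamma (1 - α) :=
    one_div_nonneg.2 (Real.Gamma_pos_of_pos (sub_pos.2 hα1)).le
  have ha : ∀ j, 1 ≤ j → j < m →
      (∫ s in (t (j - 1))..(t j), (t m - s) ^ (-α)) / (t j - t (j - 1)) ≤
        (∫ s in (t (j + 1 - 1))..(t (j + 1)), (t m - s) ^ (-α)) / (t (j + 1) - t (j + 1 - 1)) :=
    fun j hj hjm => by
      simpa using average_sub_rpow_neg_le hα0 hα1 (ht j hj hjm.le)
        (by simpa using ht (j + 1) (by omega) hjm) (mesh_le ht hjm le_rfl)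
  rw [l1_eq_sum_mul_average]
  refine mul_nonpos_of_nonneg_of_nonpos hΓ ?_
  simpa [hbm] using sum_Icc_sub_mul_le _ b hb hb0 m ha

lemma SignType.coe_mul_le_abs {R : Type*} [Ring R] [LinearOrder R] [IsOrderedRing R]
    (s : SignType) (x : R) : (s : R) * x ≤ |x| := by
  cases s <;> simp [le_abs_self, neg_le_abs]

lemma l1_abs_le_sign_mul {α : ℝ} (hα0 : 0 ≤ α) (hα1 : α < 1) {t e : ℕ → ℝ} {m : ℕ}
    (ht : ∀ j, 1 ≤ j → j ≤ m → t (j - 1) < t j) (he0 : e 0 = 0) :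
    l1 α t (fun j => |e j|) m ≤ SignType.sign (e m) * l1 α t e m := by
  have h := l1_nonpos hα0 hα1 ht (b := fun j => |e j| - SignType.sign (e m) * e j)
    (fun j => sub_nonneg.2 (SignType.coe_mul_le_abs _ _)) (by simp [he0]) (by simp)
  rw [l1_sub_const_mul] at h
  linarith

lemma neg_mul_abs_le_sign_mul_sub {g : ℝ → ℝ} {lam : ℝ} (hg : Monotone fun v => g v + lam * v)
    (v x : ℝ) : -(lam * |x|) ≤ SignType.sign x * (g (v + x) - g v) := by
  rcases lt_trichotomy x 0 with hx | rfl | hx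
  · have h := hg (by linarith : v + x ≤ v)
    simp only at h
    rw [sign_neg hx, abs_of_neg hx, SignType.coe_neg_one]
    linarith
  · simp
  · have h := hg (by linarith : v ≤ v + x)
    simp only at h
    rw [sign_pos hx, abs_of_pos hx, SignType.coe_one]
    linarith

theorem stmt16_general (α lam0 lam1 : ℝ) (hα : α ∈ Set.Ioo (0:ℝ) 1)
    (M : ℕ) (t : ℕ → ℝ)
    (hmono : ∀ j, 1 ≤ j → j ≤ M → t (j - 1) < t j)
    (F : ℝ → ℝ → ℝ)
    (hFmono : ∀ w : ℝ, Monotone fun v => F v w + lam0 * v)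
    (hFlip : ∀ v w ω : ℝ, |F v (w + ω) - F v w| ≤ lam1 * |ω|)
    (u e ρ : ℕ → ℝ) (he0 : e 0 = 0)
    (heq : ∀ m, 1 ≤ m → m ≤ M →
      l1 α t e m + F (u m + e m) (u (m - 1) + e (m - 1)) - F (u m) (u (m - 1)) = ρ m) :
    ∀ m, 1 ≤ m → m ≤ M →
      l1 α t (fun j => |e j|) m - lam0 * |e m| - lam1 * |e (m - 1)| ≤ |ρ m| := by
  intro m hm hmM
  set σ : SignType := SignType.sign (e m)
  have hl1 : l1 α t (fun j => |e j|) m ≤ σ * l1 α t e m :=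
    l1_abs_le_sign_mul hα.1.le hα.2 (fun j hj hjm => hmono j hj (hjm.trans hmM)) he0
  have hF0 : -(lam0 * |e m|) ≤ σ * (F (u m + e m) (u (m - 1)) - F (u m) (u (m - 1))) :=
    neg_mul_abs_le_sign_mul_sub (hFmono _) _ _
  have hF1 : -(lam1 * |e (m - 1)|) ≤
      σ * (F (u m + e m) (u (m - 1) + e (m - 1)) - F (u m + e m) (u (m - 1))) := by
    have h := SignType.coe_mul_le_abs σ
      (F (u m + e m) (u (m - 1)) - F (u m + e m) (u (m - 1) + e (m - 1)))
    rw [abs_sub_comm] at h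
    linarith [hFlip (u m + e m) (u (m - 1)) (e (m - 1))]
  have hρ := SignType.coe_mul_le_abs σ (ρ m)
  nth_rw 1 [← heq m hm hmM] at hρ
  linarith

/-- discrete error inequality: if
`δ^α e^m + F(u^m + e^m, u^{m−1} + e^{m−1}) − F(u^m, u^{m−1}) = ρ^m`, `e^0 = 0`,
and `F` satisfies the one-sided Lipschitz conditions, then
`δ^α |e|^m − λ0|e^m| − λ1|e^{m−1}| ≤ |ρ^m|`. -/
theorem stmt16 (α lam0 lam1 T : ℝ) (hα : α ∈ Set.Ioo (0:ℝ) 1)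
    (hlam0 : 0 ≤ lam0) (hlam1 : 0 ≤ lam1) (hT : 0 < T)
    (M : ℕ) (t : ℕ → ℝ) (ht0 : t 0 = 0) (htT : t M = T)
    (hmono : ∀ j, 1 ≤ j → j ≤ M → t (j - 1) < t j)
    (F : ℝ → ℝ → ℝ)
    (hFmono : ∀ w : ℝ, Monotone fun v => F v w + lam0 * v)
    (hFlip : ∀ v w ω : ℝ, |F v (w + ω) - F v w| ≤ lam1 * |ω|)
    (u e ρ : ℕ → ℝ) (he0 : e 0 = 0)
    (heq : ∀ m, 1 ≤ m → m ≤ M →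
      l1 α t e m + F (u m + e m) (u (m - 1) + e (m - 1)) - F (u m) (u (m - 1)) = ρ m) :
    ∀ m, 1 ≤ m → m ≤ M →
      l1 α t (fun j => |e j|) m - lam0 * |e m| - lam1 * |e (m - 1)| ≤ |ρ m| :=
  stmt16_general α lam0 lam1 hα M t hmono F hFmono hFlip u e ρ he0 heq
end
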